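/- arXiv:1511.07852 — 9 statements merged into one kernel-verified Lean document; each statement's English description precedes it below -/
import Mathlib

section
/- Let P be a linear endomorphism of ℝ^{2N} that is both orthogonal and symplectic, and let K = ker(P − id). Then for every subspace L ⊆ ℝ^{2N}, dim (P − id)⁻¹(L) = dim K + dim(L ∩ K^⊥), where (P − id)⁻¹(L) denotes the preimage subspace and K^⊥ is the ω-orthogonal complement of K. -/
open Matrix

/-- The ω-orthogonal complement of a subspace `K` of `ℝ^{2N}`, where
`ω(x, y) = ⟨J x, y⟩` with `J` the standard complex structure. -/
def omegaPerp (N : ℕ) (K : Submodule ℝ ((Fin N ⊕ Fin N) → ℝ)) :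
    Submodule ℝ ((Fin N ⊕ Fin N) → ℝ) where
  carrier := {x | ∀ w ∈ K, (Matrix.J (Fin N) ℝ).mulVec x ⬝ᵥ w = 0}
  add_mem' := by
    intro a b ha hb w hw
    simp [Matrix.mulVec_add, add_dotProduct, ha w hw, hb w hw]
  zero_mem' := by
    intro w hw
    simp
  smul_mem' := by
    intro c a ha w hw
    simp [Matrix.mulVec_smul, smul_dotProduct, ha w hw]

/-! If `P` preserves a bilinear form `B` and `P w = w`, then
`B w (P y - y) = B (P w) (P y) - B w y = 0`, so `range (P - id)` lies in the `B`-orthogonal of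
`ker (P - id)`. For nondegenerate `B` both spaces have dimension `dim V - dim ker (P - id)`, so
they coincide. Rank–nullity for `P - id` restricted to the preimage of `L`, whose image is
`L ∩ range (P - id)`, then gives the formula with `B = ω`. -/

theorem LinearMap.finrank_comap_eq_finrank_ker_add_finrank_inf_range {K V W : Type*} [Field K]
    [AddCommGroup V] [Module K V] [FiniteDimensional K V] [AddCommGroup W] [Module K W]
    (f : V →ₗ[K] W) (L : Submodule K W) :
    Module.finrank K (L.comap f) = Module.finrank K (ker f) + Module.finrank K ↥(L ⊓ range f) := by
  have hker : ker (f.domRestrict (L.comap f)) ≃ₗ[K] ker f := by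
    rw [ker_domRestrict]
    exact Submodule.comapSubtypeEquivOfLe fun x hx => by simp [mem_ker.mp hx]
  rw [← (f.domRestrict (L.comap f)).finrank_range_add_finrank_ker, hker.finrank_eq,
    range_domRestrict, Submodule.map_comap_eq, inf_comm, add_comm]

namespace LinearMap.BilinForm

theorem range_sub_id_le_orthogonal_ker {R M : Type*} [CommRing R] [AddCommGroup M] [Module R M]
    {B : LinearMap.BilinForm R M} {P : M →ₗ[R] M} (hP : B.IsOrthogonal P) :
    range (P - LinearMap.id) ≤ B.orthogonal (ker (P - LinearMap.id)) := by
  rintro _ ⟨y, rfl⟩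
  rw [mem_orthogonal_iff]
  intro w hw
  have hPw : P w = w := sub_eq_zero.mp hw
  rw [LinearMap.sub_apply, LinearMap.id_apply, map_sub, ← hP w y, hPw, sub_self]

theorem range_sub_id_eq_orthogonal_ker {K V : Type*} [Field K] [AddCommGroup V] [Module K V]
    [FiniteDimensional K V] {B : LinearMap.BilinForm K V} {P : V →ₗ[K] V} (hB : B.Nondegenerate)
    (hP : B.IsOrthogonal P) :
    range (P - LinearMap.id) = B.orthogonal (ker (P - LinearMap.id)) := by
  refine Submodule.eq_of_le_of_finrank_eq (range_sub_id_le_orthogonal_ker hP) ?_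
  rw [finrank_orthogonal hB, ← (P - LinearMap.id : V →ₗ[K] V).finrank_range_add_finrank_ker,
    Nat.add_sub_cancel]

end LinearMap.BilinForm

theorem Matrix.nondegenerate_toBilin'_J (l R : Type*) [Fintype l] [DecidableEq l] [CommRing R]
    [IsDomain R] : (toBilin' (J l R)).Nondegenerate :=
  (nondegenerate_of_det_ne_zero fun h => by simpa [h] using J_det_mul_J_det l R).toBilin'

theorem omegaPerp_eq_orthogonal (N : ℕ) (K : Submodule ℝ ((Fin N ⊕ Fin N) → ℝ)) :
    omegaPerp N K = (toBilin' (J (Fin N) ℝ)).orthogonal K := by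
  ext x
  rw [LinearMap.BilinForm.mem_orthogonal_iff]
  exact forall₂_congr fun w _ => by rw [toBilin'_apply', dotProduct_comm]

theorem dim_preimage_orthogonal_symplectic_general
    (N : ℕ) (P : Matrix (Fin N ⊕ Fin N) (Fin N ⊕ Fin N) ℝ)
    (hsympl : ∀ x y : (Fin N ⊕ Fin N) → ℝ,
      (Matrix.J (Fin N) ℝ).mulVec (P.mulVec x) ⬝ᵥ P.mulVec y
        = (Matrix.J (Fin N) ℝ).mulVec x ⬝ᵥ y)
    (K : Submodule ℝ ((Fin N ⊕ Fin N) → ℝ))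
    (hK : K = LinearMap.ker (P.mulVecLin - LinearMap.id))
    (L : Submodule ℝ ((Fin N ⊕ Fin N) → ℝ)) :
    Module.finrank ℝ ↥(Submodule.comap (P.mulVecLin - LinearMap.id) L)
      = Module.finrank ℝ ↥K + Module.finrank ℝ ↥(L ⊓ omegaPerp N K) := by
  have hP : (toBilin' (J (Fin N) ℝ)).IsOrthogonal P.mulVecLin := fun x y => by
    rw [toBilin'_apply', toBilin'_apply', mulVecLin_apply, mulVecLin_apply, dotProduct_comm,
      hsympl y x, dotProduct_comm]
  rw [hK, omegaPerp_eq_orthogonal, ← LinearMap.BilinForm.range_sub_id_eq_orthogonal_ker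
    (nondegenerate_toBilin'_J (Fin N) ℝ) hP]
  exact LinearMap.finrank_comap_eq_finrank_ker_add_finrank_inf_range _ L

/-- Let `P` be a linear endomorphism of `ℝ^{2N}` that is both orthogonal
and symplectic, and let `K = ker (P − id)`. Then for every subspace `L ⊆ ℝ^{2N}`,
`dim (P − id)⁻¹(L) = dim K + dim (L ∩ K^⊥)`. -/
theorem dim_preimage_orthogonal_symplectic
    (N : ℕ) (P : Matrix (Fin N ⊕ Fin N) (Fin N ⊕ Fin N) ℝ)
    (horth : ∀ x y : (Fin N ⊕ Fin N) → ℝ, P.mulVec x ⬝ᵥ P.mulVec y = x ⬝ᵥ y)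
    (hsympl : ∀ x y : (Fin N ⊕ Fin N) → ℝ,
      (Matrix.J (Fin N) ℝ).mulVec (P.mulVec x) ⬝ᵥ P.mulVec y
        = (Matrix.J (Fin N) ℝ).mulVec x ⬝ᵥ y)
    (K : Submodule ℝ ((Fin N ⊕ Fin N) → ℝ))
    (hK : K = LinearMap.ker (P.mulVecLin - LinearMap.id))
    (L : Submodule ℝ ((Fin N ⊕ Fin N) → ℝ)) :
    Module.finrank ℝ ↥(Submodule.comap (P.mulVecLin - LinearMap.id) L)
      = Module.finrank ℝ ↥K + Module.finrank ℝ ↥(L ⊓ omegaPerp N K) :=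
  dim_preimage_orthogonal_symplectic_general N P hsympl K hK L
end

section
/- Let (E, ω) be a finite-dimensional symplectic real vector space and let f be a symplectic linear endomorphism of E. Let W = ⋃_k ker (f − id)^k be the generalized eigenspace of f for the eigenvalue 1. Then the restriction of ω to W is nondegenerate (W ∩ W^⊥ = 0 and E = W ⊕ W^⊥), the subspace W^⊥ is f-invariant, the restriction of (f − id) to W is nilpotent, and 1 is not an eigenvalue of the restriction of f to W^⊥. -/
/-- The ω-orthogonal complement of a subspace `K`:
`{x ∈ E : ω(x, w) = 0 for all w ∈ K}`. -/
def symplPerp {E : Type*} [AddCommGroup E] [Module ℝ E]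
    (ω : E →ₗ[ℝ] E →ₗ[ℝ] ℝ) (K : Submodule ℝ E) : Submodule ℝ E where
  carrier := {x | ∀ w ∈ K, ω x w = 0}
  add_mem' := by
    intro a b ha hb w hw
    simp [map_add, LinearMap.add_apply, ha w hw, hb w hw]
  zero_mem' := by
    intro w hw
    simp
  smul_mem' := by
    intro c a ha w hw
    simp [map_smul, LinearMap.smul_apply, ha w hw]

/-- Let `(E, ω)` be a finite-dimensional symplectic real vector space and
`f` a symplectic endomorphism. Let `W` be the generalized eigenspace of `f` for the
eigenvalue `1`. Then `ω` restricted to `W` is nondegenerate (`W ∩ W^⊥ = 0` and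
`E = W ⊕ W^⊥`), `W^⊥` is `f`-invariant, `(f − id)` restricted to `W` is nilpotent, and `1`
is not an eigenvalue of the restriction of `f` to `W^⊥`. -/
theorem generalizedEigenspace_one_symplectic
    (E : Type*) [AddCommGroup E] [Module ℝ E] [FiniteDimensional ℝ E]
    (ω : E →ₗ[ℝ] E →ₗ[ℝ] ℝ)
    (halt : ∀ x : E, ω x x = 0)
    (hnondeg : ∀ x : E, (∀ y : E, ω x y = 0) → x = 0)
    (f : E →ₗ[ℝ] E)
    (hsympl : ∀ x y : E, ω (f x) (f y) = ω x y)
    (W : Submodule ℝ E)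
    (hW : W = ⨆ k : ℕ, LinearMap.ker ((f - LinearMap.id) ^ k)) :
    W ⊓ symplPerp ω W = ⊥ ∧
    IsCompl W (symplPerp ω W) ∧
    (∀ x ∈ symplPerp ω W, f x ∈ symplPerp ω W) ∧
    (∃ k : ℕ, ∀ x ∈ W, (((f - LinearMap.id) ^ k : E →ₗ[ℝ] E)) x = 0) ∧
    (∀ x ∈ symplPerp ω W, f x = x → x = 0) := by
  classical
  have hanti : ∀ x y : E, ω y x = -ω x y := by
    intro x y
    have h := halt (x + y)
    simp only [map_add, LinearMap.add_apply, halt x, halt y] at h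
    linarith
  set n := Module.finrank ℝ E with hn
  set g : E →ₗ[ℝ] E := f - LinearMap.id with hgdef
  -- W = ker (g ^ n)
  have hWker : W = LinearMap.ker (g ^ n) := by
    rw [hW]
    apply le_antisymm
    · exact iSup_le fun k => Module.End.ker_pow_le_ker_pow_finrank g k
    · exact le_iSup (fun k => LinearMap.ker (g ^ k)) n
  -- f is injective
  have hfinj : Function.Injective f := by
    intro a b hab
    have hz : ∀ y : E, ω (a - b) y = 0 := by
      intro y
      have h1 : ω (f (a - b)) (f y) = ω (a - b) y := hsympl _ _
      rw [map_sub, hab, sub_self] at h1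
      simpa using h1.symm
    have := hnondeg _ hz
    exact sub_eq_zero.mp this
  -- f and g commute
  have hcomm : ∀ x : E, f (g x) = g (f x) := by
    intro x
    simp only [hgdef, LinearMap.sub_apply, LinearMap.id_apply, map_sub]
  -- f commutes with powers of g
  have hcommpow : ∀ (k : ℕ) (x : E), f ((g ^ k) x) = (g ^ k) (f x) := by
    intro k
    induction k with
    | zero => intro x; simp
    | succ m ih =>
      intro x
      rw [pow_succ, Module.End.mul_apply, Module.End.mul_apply, ih (g x), hcomm x]
  -- key relation
  have hrel : ∀ x y : E, ω (g x) y = -(ω (f x) (g y)) := by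
    intro x y
    simp only [hgdef, LinearMap.sub_apply, LinearMap.id_apply, map_sub]
    rw [hsympl x y]
    ring
  -- main iterated relation
  have hmain : ∀ (k : ℕ) (x y : E),
      ω ((f ^ k) x) ((g ^ k) y) = (-1 : ℝ) ^ k * ω ((g ^ k) x) y := by
    intro k
    induction k with
    | zero => intro x y; simp
    | succ m ih =>
      intro x y
      have h1 : (f ^ (m + 1)) x = (f ^ m) (f x) := by
        rw [pow_succ, Module.End.mul_apply]
      have h2 : (g ^ (m + 1)) y = (g ^ m) (g y) := by
        rw [pow_succ, Module.End.mul_apply]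
      have h3 : (g ^ (m + 1)) x = g ((g ^ m) x) := by
        rw [pow_succ', Module.End.mul_apply]
      rw [h1, h2, ih (f x) (g y), ← hcommpow m x]
      have h4 : ω (g ((g ^ m) x)) y = -(ω (f ((g ^ m) x)) (g y)) := hrel _ _
      have h5 : ω (f ((g ^ m) x)) (g y) = -(ω (g ((g ^ m) x)) y) := by
        rw [h4]; ring
      rw [h5, h3]
      ring
  -- f maps W into W
  have hmapsW : ∀ x ∈ W, f x ∈ W := by
    intro x hx
    rw [hWker] at hx ⊢
    rw [LinearMap.mem_ker] at hx ⊢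
    rw [← hcommpow n x, hx, map_zero]
  -- surjectivity of f on W
  have hsurj1 : ∀ w ∈ W, ∃ x ∈ W, f x = w := by
    have hFD : FiniteDimensional ℝ W := inferInstance
    let fW : W →ₗ[ℝ] W := f.restrict hmapsW
    have hinj : Function.Injective fW := by
      intro a b hab
      have : f (a : E) = f (b : E) := congrArg Subtype.val hab
      exact Subtype.ext (hfinj this)
    have hsurj : Function.Surjective fW :=
      (LinearMap.injective_iff_surjective).mp hinj
    intro w hw
    obtain ⟨x, hx⟩ := hsurj ⟨w, hw⟩
    exact ⟨(x : E), x.2, congrArg Subtype.val hx⟩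
  have hsurjpow : ∀ (m : ℕ), ∀ w ∈ W, ∃ x ∈ W, (f ^ m) x = w := by
    intro m
    induction m with
    | zero => intro w hw; exact ⟨w, hw, by simp⟩
    | succ k ih =>
      intro w hw
      obtain ⟨u, hu, hfu⟩ := ih w hw
      obtain ⟨x, hx, hfx⟩ := hsurj1 u hu
      refine ⟨x, hx, ?_⟩
      rw [pow_succ, Module.End.mul_apply, hfx, hfu]
  -- W is orthogonal to the range of g^n
  have horth : ∀ w ∈ W, ∀ y : E, ω w ((g ^ n) y) = 0 := by
    intro w hw y
    obtain ⟨x, hx, hfx⟩ := hsurjpow n w hw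
    have hgx : (g ^ n) x = 0 := by
      rw [hWker] at hx; exact hx
    rw [← hfx, hmain n x y, hgx]
    simp
  -- the range of g^n lies in the perp of W
  have hrangele : LinearMap.range (g ^ n) ≤ symplPerp ω W := by
    rintro v ⟨y, rfl⟩ w hw
    rw [hanti w ((g ^ n) y), horth w hw y, neg_zero]
  -- W ⊓ range g^n = ⊥
  have hWrange : W ⊓ LinearMap.range (g ^ n) = ⊥ := by
    rw [eq_bot_iff]
    rintro x ⟨hxW, y, rfl⟩
    have h1 : (g ^ n) ((g ^ n) y) = 0 := by
      rw [hWker] at hxW; exact hxW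
    have h2 : (g ^ (n + n)) y = 0 := by
      rw [pow_add, Module.End.mul_apply]; exact h1
    have h3 : y ∈ LinearMap.ker (g ^ (n + n)) := h2
    have h4 : LinearMap.ker (g ^ (n + n)) = LinearMap.ker (g ^ n) :=
      Module.End.ker_pow_eq_ker_pow_finrank_of_le (Nat.le_add_right n n)
    rw [h4, LinearMap.mem_ker] at h3
    simp [h3]
  -- W ⊔ range g^n = ⊤
  have htop : W ⊔ LinearMap.range (g ^ n) = ⊤ := by
    apply Submodule.eq_top_of_finrank_eq
    have h1 := Submodule.finrank_sup_add_finrank_inf_eq W (LinearMap.range (g ^ n))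
    rw [hWrange] at h1
    simp only [finrank_bot, add_zero] at h1
    have h2 := LinearMap.finrank_range_add_finrank_ker (g ^ n)
    rw [h1, hWker]
    omega
  -- disjointness of W and its perp
  have hdisj : W ⊓ symplPerp ω W = ⊥ := by
    rw [eq_bot_iff]
    rintro x ⟨hxW, hxP⟩
    have hz : ∀ y : E, ω x y = 0 := by
      intro y
      have hy : y ∈ W ⊔ LinearMap.range (g ^ n) := htop ▸ Submodule.mem_top
      obtain ⟨w, hw, v, hv, rfl⟩ := Submodule.mem_sup.mp hy
      obtain ⟨u, rfl⟩ := hv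
      rw [map_add, hxP w hw, horth x hxW u, add_zero]
    simp [hnondeg x hz]
  refine ⟨hdisj, ⟨disjoint_iff.mpr hdisj, ?_⟩, ?_, ⟨n, ?_⟩, ?_⟩
  · -- codisjoint
    rw [codisjoint_iff, eq_top_iff, ← htop]
    exact sup_le_sup_left hrangele W
  · -- invariance of the perp
    intro x hx w hw
    obtain ⟨w', hw', hfw'⟩ := hsurj1 w hw
    rw [← hfw', hsympl x w']
    exact hx w' hw'
  · -- nilpotency
    intro x hx
    rw [hWker, LinearMap.mem_ker] at hx
    exact hx
  · -- no eigenvalue 1 on the perp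
    intro x hx hfx
    have hxW : x ∈ W := by
      have h1 : x ∈ LinearMap.ker (g ^ 1) := by
        rw [LinearMap.mem_ker, pow_one]
        simp [hgdef, hfx]
      rw [hWker]
      exact Module.End.ker_pow_le_ker_pow_finrank g 1 h1
    have : x ∈ W ⊓ symplPerp ω W := ⟨hxW, hx⟩
    rw [hdisj] at this
    simpa using this
end

section
/- Let (E, ω) be a finite-dimensional symplectic real vector space, let f be a symplectic linear endomorphism of E, and let λ be a real number with λ > 0 and λ ≠ 1. Let G_λ and G_{λ⁻¹} denote the generalized eigenspaces of f for the eigenvalues λ and λ⁻¹. Then: (i) ω vanishes identically on G_λ and on G_{λ⁻¹} (both are isotropic); (ii) dim G_λ = dim G_{λ⁻¹}; (iii) the restriction of ω to E₁ = G_λ + G_{λ⁻¹} is nondegenerate, so E = E₁ ⊕ E₁^⊥; (iv) E₁^⊥ is f-invariant and neither λ nor λ⁻¹ is an eigenvalue of the restriction of f to E₁^⊥. -/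
private lemma comm_sub_smul {E : Type*} [AddCommGroup E] [Module ℝ E]
    (f : E →ₗ[ℝ] E) (c : ℝ) (n : ℕ) :
    f * (f - c • LinearMap.id) ^ n = (f - c • LinearMap.id) ^ n * f := by
  have hid : (LinearMap.id : E →ₗ[ℝ] E) = 1 := rfl
  have h : Commute f (f - c • LinearMap.id) := by
    rw [hid]
    exact (Commute.refl f).sub_right ((Commute.one_right f).smul_right c)
  exact (h.pow_right n).eq

private lemma symp_adj1 {E : Type*} [AddCommGroup E] [Module ℝ E]
    (ω : E →ₗ[ℝ] E →ₗ[ℝ] ℝ) (f : E →ₗ[ℝ] E)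
    (hsympl : ∀ x y : E, ω (f x) (f y) = ω x y)
    (α : ℝ) (hα : α ≠ 0) (x z : E) :
    ω ((f - α • LinearMap.id : E →ₗ[ℝ] E) x) (f z)
      = -α * ω x ((f - α⁻¹ • LinearMap.id : E →ₗ[ℝ] E) z) := by
  have h1 := hsympl x z
  simp only [LinearMap.sub_apply, LinearMap.smul_apply, LinearMap.id_apply,
    map_sub, map_smul, smul_eq_mul, LinearMap.sub_apply]
  linear_combination h1 - ω x z * mul_inv_cancel₀ hα

private lemma symp_adj {E : Type*} [AddCommGroup E] [Module ℝ E]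
    (ω : E →ₗ[ℝ] E →ₗ[ℝ] ℝ) (f : E →ₗ[ℝ] E)
    (hsympl : ∀ x y : E, ω (f x) (f y) = ω x y)
    (α : ℝ) (hα : α ≠ 0) :
    ∀ (n : ℕ) (x z : E),
      ω (((f - α • LinearMap.id) ^ n : E →ₗ[ℝ] E) x) ((f ^ n : E →ₗ[ℝ] E) z)
        = (-α) ^ n * ω x (((f - α⁻¹ • LinearMap.id) ^ n : E →ₗ[ℝ] E) z) := by
  intro n
  induction n with
  | zero => intro x z; simp
  | succ n ih =>
      intro x z
      have h1 : ((f - α • LinearMap.id) ^ (n + 1) : E →ₗ[ℝ] E) x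
          = ((f - α • LinearMap.id) ^ n : E →ₗ[ℝ] E)
              ((f - α • LinearMap.id : E →ₗ[ℝ] E) x) := by
        rw [pow_succ, Module.End.mul_apply]
      have h2 : ((f ^ (n + 1) : E →ₗ[ℝ] E) z) = (f ^ n : E →ₗ[ℝ] E) (f z) := by
        rw [pow_succ, Module.End.mul_apply]
      rw [h1, h2, ih ((f - α • LinearMap.id : E →ₗ[ℝ] E) x) (f z)]
      have h3 : ((f - α⁻¹ • LinearMap.id) ^ n : E →ₗ[ℝ] E) (f z)
          = f (((f - α⁻¹ • LinearMap.id) ^ n : E →ₗ[ℝ] E) z) := by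
        have hc := comm_sub_smul f α⁻¹ n
        calc ((f - α⁻¹ • LinearMap.id) ^ n : E →ₗ[ℝ] E) (f z)
            = (((f - α⁻¹ • LinearMap.id) ^ n) * f : E →ₗ[ℝ] E) z := rfl
          _ = (f * ((f - α⁻¹ • LinearMap.id) ^ n) : E →ₗ[ℝ] E) z := by rw [hc]
          _ = f (((f - α⁻¹ • LinearMap.id) ^ n : E →ₗ[ℝ] E) z) := rfl
      rw [h3, symp_adj1 ω f hsympl α hα]
      have h4 : (f - α⁻¹ • LinearMap.id : E →ₗ[ℝ] E)
            (((f - α⁻¹ • LinearMap.id) ^ n : E →ₗ[ℝ] E) z)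
          = ((f - α⁻¹ • LinearMap.id) ^ (n + 1) : E →ₗ[ℝ] E) z := by
        rw [pow_succ', Module.End.mul_apply]
      rw [h4]
      ring

private lemma symp_vanish {E : Type*} [AddCommGroup E] [Module ℝ E]
    (ω : E →ₗ[ℝ] E →ₗ[ℝ] ℝ) (f : E →ₗ[ℝ] E)
    (hsympl : ∀ x y : E, ω (f x) (f y) = ω x y)
    (α β : ℝ) (hαβ : α * β ≠ 1) :
    ∀ (k m n : ℕ), m + n ≤ k → ∀ x y : E,
      ((f - α • LinearMap.id) ^ m : E →ₗ[ℝ] E) x = 0 →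
      ((f - β • LinearMap.id) ^ n : E →ₗ[ℝ] E) y = 0 →
      ω x y = 0 := by
  intro k
  induction k with
  | zero =>
      intro m n hmn x y hx hy
      obtain ⟨rfl, rfl⟩ : m = 0 ∧ n = 0 := by omega
      simp only [pow_zero, Module.End.one_apply] at hx
      simp [hx]
  | succ k ih =>
      intro m n hmn x y hx hy
      match m, n with
      | 0, n =>
          simp only [pow_zero, Module.End.one_apply] at hx
          simp [hx]
      | m + 1, 0 =>
          simp only [pow_zero, Module.End.one_apply] at hy
          simp [hy]
      | m + 1, n + 1 =>
          set x' : E := (f - α • LinearMap.id : E →ₗ[ℝ] E) x with hx'def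
          set y' : E := (f - β • LinearMap.id : E →ₗ[ℝ] E) y with hy'def
          have hx' : ((f - α • LinearMap.id) ^ m : E →ₗ[ℝ] E) x' = 0 := by
            rw [hx'def, ← Module.End.mul_apply, ← pow_succ]; exact hx
          have hy' : ((f - β • LinearMap.id) ^ n : E →ₗ[ℝ] E) y' = 0 := by
            rw [hy'def, ← Module.End.mul_apply, ← pow_succ]; exact hy
          have h1 : ω x' y' = 0 := ih m n (by omega) x' y' hx' hy'
          have h2 : ω x' y = 0 := ih m (n + 1) (by omega) x' y hx' hy
          have h3 : ω x y' = 0 := ih (m + 1) n (by omega) x y' hx hy'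
          have hfx : f x = x' + α • x := by
            rw [hx'def]; simp [LinearMap.sub_apply]
          have hfy : f y = y' + β • y := by
            rw [hy'def]; simp [LinearMap.sub_apply]
          have key : ω (f x) (f y) = ω x' y' + β * ω x' y + α * ω x y' + α * β * ω x y := by
            rw [hfx, hfy]
            simp only [map_add, map_smul, LinearMap.add_apply, LinearMap.smul_apply,
              smul_eq_mul]
            ring
          have h4 : (1 - α * β) * ω x y = 0 := by
            linear_combination key - hsympl x y + h1 + β * h2 + α * h3
          rcases mul_eq_zero.mp h4 with h5 | h5
          · exact absurd (by linarith : α * β = 1) hαβ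
          · exact h5
/-- Let `(E, ω)` be a finite-dimensional symplectic real vector space, `f`
a symplectic endomorphism, and `λ > 0`, `λ ≠ 1`. Let `G_λ`, `G_{λ⁻¹}` be the generalized
eigenspaces of `f` for `λ` and `λ⁻¹`. Then: (i) both are isotropic; (ii) they have the same
dimension; (iii) `ω` restricted to `E₁ = G_λ + G_{λ⁻¹}` is nondegenerate, so
`E = E₁ ⊕ E₁^⊥`; (iv) `E₁^⊥` is `f`-invariant and neither `λ` nor `λ⁻¹` is an eigenvalue
of the restriction of `f` to `E₁^⊥`. -/
theorem generalizedEigenspace_pair_symplectic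
    (E : Type*) [AddCommGroup E] [Module ℝ E] [FiniteDimensional ℝ E]
    (ω : E →ₗ[ℝ] E →ₗ[ℝ] ℝ)
    (halt : ∀ x : E, ω x x = 0)
    (hnondeg : ∀ x : E, (∀ y : E, ω x y = 0) → x = 0)
    (f : E →ₗ[ℝ] E)
    (hsympl : ∀ x y : E, ω (f x) (f y) = ω x y)
    (lam : ℝ) (hpos : 0 < lam) (hne : lam ≠ 1)
    (Glam Ginv E₁ : Submodule ℝ E)
    (hGlam : Glam = ⨆ k : ℕ, LinearMap.ker ((f - lam • LinearMap.id) ^ k))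
    (hGinv : Ginv = ⨆ k : ℕ, LinearMap.ker ((f - lam⁻¹ • LinearMap.id) ^ k))
    (hE₁ : E₁ = Glam ⊔ Ginv) :
    (∀ x ∈ Glam, ∀ y ∈ Glam, ω x y = 0) ∧
    (∀ x ∈ Ginv, ∀ y ∈ Ginv, ω x y = 0) ∧
    Module.finrank ℝ ↥Glam = Module.finrank ℝ ↥Ginv ∧
    E₁ ⊓ symplPerp ω E₁ = ⊥ ∧
    IsCompl E₁ (symplPerp ω E₁) ∧
    (∀ x ∈ symplPerp ω E₁, f x ∈ symplPerp ω E₁) ∧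
    (∀ x ∈ symplPerp ω E₁, f x = lam • x → x = 0) ∧
    (∀ x ∈ symplPerp ω E₁, f x = lam⁻¹ • x → x = 0) := by
  classical
  set gl : E →ₗ[ℝ] E := f - lam • LinearMap.id with hgl
  set gi : E →ₗ[ℝ] E := f - lam⁻¹ • LinearMap.id with hgi
  set N : ℕ := Module.finrank ℝ E with hN
  have hlam0 : lam ≠ 0 := ne_of_gt hpos
  have hinv0 : lam⁻¹ ≠ 0 := inv_ne_zero hlam0
  have hll : lam * lam ≠ 1 := by
    intro h
    rcases mul_self_eq_one_iff.mp h with h1 | h1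
    · exact hne h1
    · linarith
  have hii : lam⁻¹ * lam⁻¹ ≠ 1 := by
    intro h
    rcases mul_self_eq_one_iff.mp h with h1 | h1
    · exact hne (by rw [← inv_inv lam, h1]; norm_num)
    · have : (0:ℝ) < lam⁻¹ := inv_pos.mpr hpos
      linarith
  -- stabilized descriptions of the generalized eigenspaces
  have hGlam' : Glam = LinearMap.ker (gl ^ N) := by
    rw [hGlam]
    apply le_antisymm
    · exact iSup_le fun k => Module.End.ker_pow_le_ker_pow_finrank gl k
    · exact le_iSup (fun k => LinearMap.ker (gl ^ k)) N
  have hGinv' : Ginv = LinearMap.ker (gi ^ N) := by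
    rw [hGinv]
    apply le_antisymm
    · exact iSup_le fun k => Module.End.ker_pow_le_ker_pow_finrank gi k
    · exact le_iSup (fun k => LinearMap.ker (gi ^ k)) N
  have memGlam : ∀ v : E, v ∈ Glam ↔ (gl ^ N) v = 0 := by
    intro v; rw [hGlam']; exact LinearMap.mem_ker
  have memGinv : ∀ v : E, v ∈ Ginv ↔ (gi ^ N) v = 0 := by
    intro v; rw [hGinv']; exact LinearMap.mem_ker
  -- isotropy
  have isoLam : ∀ x ∈ Glam, ∀ y ∈ Glam, ω x y = 0 := by
    intro x hx y hy
    exact symp_vanish ω f hsympl lam lam hll (N + N) N N le_rfl x y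
      ((memGlam x).mp hx) ((memGlam y).mp hy)
  have isoInv : ∀ x ∈ Ginv, ∀ y ∈ Ginv, ω x y = 0 := by
    intro x hx y hy
    exact symp_vanish ω f hsympl lam⁻¹ lam⁻¹ hii (N + N) N N le_rfl x y
      ((memGinv x).mp hx) ((memGinv y).mp hy)
  -- Fitting decomposition
  have fitting : ∀ g : E →ₗ[ℝ] E, LinearMap.ker (g ^ N) ⊔ LinearMap.range (g ^ N) = ⊤ := by
    intro g
    have h2N : LinearMap.ker (g ^ (N + N)) = LinearMap.ker (g ^ N) := by
      rw [hN]
      exact Module.End.ker_pow_eq_ker_pow_finrank_of_le (by omega)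
    have hdisj : LinearMap.ker (g ^ N) ⊓ LinearMap.range (g ^ N) = ⊥ := by
      rw [Submodule.eq_bot_iff]
      rintro v ⟨hvk, z, rfl⟩
      have hz : (g ^ (N + N)) z = 0 := by
        rw [pow_add, Module.End.mul_apply]; exact hvk
      have hzk : z ∈ LinearMap.ker (g ^ N) := by rw [← h2N]; exact hz
      exact LinearMap.mem_ker.mp hzk
    have hrank := LinearMap.finrank_range_add_finrank_ker (g ^ N)
    apply Submodule.eq_top_of_finrank_eq
    have hsum := Submodule.finrank_sup_add_finrank_inf_eq
      (LinearMap.ker (g ^ N)) (LinearMap.range (g ^ N))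
    rw [hdisj, finrank_bot] at hsum
    omega
  -- nondegenerate pairing between Glam and Ginv
  have hpairA : ∀ a ∈ Glam, (∀ b ∈ Ginv, ω a b = 0) → a = 0 := by
    intro a ha hab
    apply hnondeg
    intro y
    have hy : y ∈ LinearMap.ker (gi ^ N) ⊔ LinearMap.range (gi ^ N) := by
      rw [fitting gi]; trivial
    obtain ⟨b, hb, c, hc, rfl⟩ := Submodule.mem_sup.mp hy
    obtain ⟨z, rfl⟩ := hc
    have h1 : ω a b = 0 := hab b ((memGinv b).mpr hb)
    have h2 : ω a ((gi ^ N) z) = 0 := by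
      have hA := symp_adj ω f hsympl lam hlam0 N a z
      rw [(memGlam a).mp ha] at hA
      simp only [map_zero, LinearMap.zero_apply] at hA
      have hpow : (-lam) ^ N ≠ 0 := pow_ne_zero _ (neg_ne_zero.mpr hlam0)
      rcases mul_eq_zero.mp hA.symm with h | h
      · exact absurd h hpow
      · exact h
    simp [map_add, h1, h2]
  have hpairB : ∀ b ∈ Ginv, (∀ a ∈ Glam, ω b a = 0) → b = 0 := by
    intro b hb hba
    apply hnondeg
    intro y
    have hy : y ∈ LinearMap.ker (gl ^ N) ⊔ LinearMap.range (gl ^ N) := by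
      rw [fitting gl]; trivial
    obtain ⟨a, ha, c, hc, rfl⟩ := Submodule.mem_sup.mp hy
    obtain ⟨z, rfl⟩ := hc
    have h1 : ω b a = 0 := hba a ((memGlam a).mpr ha)
    have h2 : ω b ((gl ^ N) z) = 0 := by
      have hA := symp_adj ω f hsympl lam⁻¹ hinv0 N b z
      rw [inv_inv] at hA
      rw [(memGinv b).mp hb] at hA
      simp only [map_zero, LinearMap.zero_apply] at hA
      have hpow : (-lam⁻¹) ^ N ≠ 0 := pow_ne_zero _ (neg_ne_zero.mpr hinv0)
      rcases mul_eq_zero.mp hA.symm with h | h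
      · exact absurd h hpow
      · exact h
    simp [map_add, h1, h2]
  -- dimension equality
  have hdim : Module.finrank ℝ ↥Glam = Module.finrank ℝ ↥Ginv := by
    have le1 : Module.finrank ℝ ↥Glam ≤ Module.finrank ℝ ↥Ginv := by
      set φ : ↥Glam →ₗ[ℝ] (↥Ginv →ₗ[ℝ] ℝ) :=
        (ω.compl₂ Ginv.subtype).comp Glam.subtype with hφ
      have hφinj : Function.Injective φ := by
        rw [← LinearMap.ker_eq_bot, Submodule.eq_bot_iff]
        intro a ha0
        have ha0' : φ a = 0 := ha0
        have : (a : E) = 0 := by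
          apply hpairA a a.2
          intro b hb
          have := LinearMap.congr_fun ha0' ⟨b, hb⟩
          simpa [hφ] using this
        exact Subtype.ext this
      have h := LinearMap.finrank_le_finrank_of_injective hφinj
      exact h.trans_eq Subspace.dual_finrank_eq
    have le2 : Module.finrank ℝ ↥Ginv ≤ Module.finrank ℝ ↥Glam := by
      set ψ : ↥Ginv →ₗ[ℝ] (↥Glam →ₗ[ℝ] ℝ) :=
        (ω.compl₂ Glam.subtype).comp Ginv.subtype with hψ
      have hψinj : Function.Injective ψ := by
        rw [← LinearMap.ker_eq_bot, Submodule.eq_bot_iff]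
        intro b hb0
        have hb0' : ψ b = 0 := hb0
        have : (b : E) = 0 := by
          apply hpairB b b.2
          intro a ha
          have := LinearMap.congr_fun hb0' ⟨a, ha⟩
          simpa [hψ] using this
        exact Subtype.ext this
      have h := LinearMap.finrank_le_finrank_of_injective hψinj
      exact h.trans_eq Subspace.dual_finrank_eq
    exact le_antisymm le1 le2
  have memPerp : ∀ x : E, x ∈ symplPerp ω E₁ ↔ ∀ w ∈ E₁, ω x w = 0 := fun _ => Iff.rfl
  -- disjointness
  have hdisjE : E₁ ⊓ symplPerp ω E₁ = ⊥ := by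
    rw [Submodule.eq_bot_iff]
    rintro x ⟨hx1, hx2⟩
    have hx2' : ∀ w ∈ E₁, ω x w = 0 := hx2
    rw [hE₁] at hx1
    obtain ⟨a, ha, b, hb, rfl⟩ := Submodule.mem_sup.mp hx1
    have ha0 : a = 0 := by
      apply hpairA a ha
      intro b' hb'
      have h1 : ω (a + b) b' = 0 := hx2' b' (hE₁ ▸ Submodule.mem_sup_right hb')
      have h2 : ω b b' = 0 := isoInv b hb b' hb'
      simp only [map_add, LinearMap.add_apply] at h1
      linarith
    have hb0 : b = 0 := by
      apply hpairB b hb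
      intro a' ha'
      have h1 : ω (a + b) a' = 0 := hx2' a' (hE₁ ▸ Submodule.mem_sup_left ha')
      have h2 : ω a a' = 0 := isoLam a ha a' ha'
      simp only [map_add, LinearMap.add_apply] at h1
      linarith
    rw [ha0, hb0, add_zero]
  -- codisjointness
  have htopE : E₁ ⊔ symplPerp ω E₁ = ⊤ := by
    have hperp_rank : N ≤ Module.finrank ℝ ↥E₁ + Module.finrank ℝ ↥(symplPerp ω E₁) := by
      set Φ : E →ₗ[ℝ] (↥E₁ →ₗ[ℝ] ℝ) := ω.compl₂ E₁.subtype with hΦ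
      have hker : LinearMap.ker Φ = symplPerp ω E₁ := by
        ext x
        simp only [LinearMap.mem_ker, memPerp]
        constructor
        · intro h w hw
          have := LinearMap.congr_fun h ⟨w, hw⟩
          simpa [hΦ] using this
        · intro h
          ext ⟨w, hw⟩
          simpa [hΦ] using h w hw
      have h1 := LinearMap.finrank_range_add_finrank_ker Φ
      have h2 : Module.finrank ℝ ↥(LinearMap.range Φ) ≤ Module.finrank ℝ (↥E₁ →ₗ[ℝ] ℝ) :=
        Submodule.finrank_le _
      have h3 : Module.finrank ℝ (↥E₁ →ₗ[ℝ] ℝ) = Module.finrank ℝ ↥E₁ :=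
        Subspace.dual_finrank_eq
      rw [hker] at h1
      omega
    apply Submodule.eq_top_of_finrank_eq
    have h4 := Submodule.finrank_sup_add_finrank_inf_eq E₁ (symplPerp ω E₁)
    rw [hdisjE, finrank_bot] at h4
    have h5 : Module.finrank ℝ ↥(E₁ ⊔ symplPerp ω E₁) ≤ N := Submodule.finrank_le _
    omega
  have hcompl : IsCompl E₁ (symplPerp ω E₁) := ⟨disjoint_iff.mpr hdisjE, codisjoint_iff.mpr htopE⟩
  -- f-invariance of the perp
  have hfinj : Function.Injective f := by
    rw [← LinearMap.ker_eq_bot, Submodule.eq_bot_iff]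
    intro x hx
    have h0 : f x = 0 := hx
    apply hnondeg
    intro y
    calc ω x y = ω (f x) (f y) := (hsympl x y).symm
      _ = 0 := by rw [h0]; simp
  have hmapGl : Submodule.map f Glam ≤ Glam := by
    rintro _ ⟨v, hv, rfl⟩
    rw [memGlam]
    have hc := comm_sub_smul f lam N
    have hv' := (memGlam v).mp hv
    calc (gl ^ N) (f v) = ((gl ^ N) * f) v := rfl
      _ = (f * (gl ^ N)) v := by rw [← hc]
      _ = f ((gl ^ N) v) := rfl
      _ = 0 := by rw [hv']; exact map_zero f
  have hmapGi : Submodule.map f Ginv ≤ Ginv := by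
    rintro _ ⟨v, hv, rfl⟩
    rw [memGinv]
    have hc := comm_sub_smul f lam⁻¹ N
    have hv' := (memGinv v).mp hv
    calc (gi ^ N) (f v) = ((gi ^ N) * f) v := rfl
      _ = (f * (gi ^ N)) v := by rw [← hc]
      _ = f ((gi ^ N) v) := rfl
      _ = 0 := by rw [hv']; exact map_zero f
  have hmap : Submodule.map f E₁ = E₁ := by
    have hle : Submodule.map f E₁ ≤ E₁ := by
      rw [hE₁, Submodule.map_sup]
      exact sup_le (hmapGl.trans le_sup_left) (hmapGi.trans le_sup_right)
    have hsurj : Function.Surjective f := LinearMap.injective_iff_surjective.mp hfinj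
    let e : E ≃ₗ[ℝ] E := LinearEquiv.ofBijective f ⟨hfinj, hsurj⟩
    have hfr : Module.finrank ℝ ↥(Submodule.map f E₁) = Module.finrank ℝ ↥E₁ := by
      have heq : Submodule.map f E₁ = Submodule.map (e : E →ₗ[ℝ] E) E₁ := rfl
      rw [heq, LinearEquiv.finrank_map_eq]
    exact Submodule.eq_of_le_of_finrank_le hle (le_of_eq hfr.symm)
  have hperp_inv : ∀ x ∈ symplPerp ω E₁, f x ∈ symplPerp ω E₁ := by
    intro x hx w hw
    have hw' : w ∈ Submodule.map f E₁ := hmap.symm ▸ hw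
    obtain ⟨v, hv, rfl⟩ := hw'
    exact (hsympl x v).trans (hx v hv)
  -- eigenvalue exclusion
  have heigL : ∀ x ∈ symplPerp ω E₁, f x = lam • x → x = 0 := by
    intro x hx hfx
    have hx1 : x ∈ Glam := by
      rw [hGlam]
      apply le_iSup (fun k => LinearMap.ker (gl ^ k)) 1
      rw [LinearMap.mem_ker, pow_one, hgl]
      simp [LinearMap.sub_apply, hfx]
    have hmem : x ∈ E₁ ⊓ symplPerp ω E₁ := ⟨hE₁ ▸ Submodule.mem_sup_left hx1, hx⟩
    rw [hdisjE] at hmem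
    simpa using hmem
  have heigI : ∀ x ∈ symplPerp ω E₁, f x = lam⁻¹ • x → x = 0 := by
    intro x hx hfx
    have hx1 : x ∈ Ginv := by
      rw [hGinv]
      apply le_iSup (fun k => LinearMap.ker (gi ^ k)) 1
      rw [LinearMap.mem_ker, pow_one, hgi]
      simp [LinearMap.sub_apply, hfx]
    have hmem : x ∈ E₁ ⊓ symplPerp ω E₁ := ⟨hE₁ ▸ Submodule.mem_sup_right hx1, hx⟩
    rw [hdisjE] at hmem
    simpa using hmem
  exact ⟨isoLam, isoInv, hdim, hdisjE, hcompl, hperp_inv, heigL, heigI⟩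
end

section
/- Let N ≥ 1, let S be a real symplectic 2N×2N matrix, and let λ be a real number with 0 < λ ≤ 1 such that λ is an eigenvalue of S of geometric multiplicity 1 (i.e. det(S − λ·I) = 0 and dim ker(S − λ·I) = 1). Then there exists a 2N×2N real matrix X with Xᵀ J + J X = 0 such that the derivative at t = 0 of the function t ↦ det(S · exp(t X) − λ·I) is strictly positive. -/
/-!
Put `A = S - λ`. As `ker A` is a line `ℝ v`, the adjugate of `A` is a nonzero rank-one matrix
`v gᵀ`, and the matrix determinant lemma `det (A + u zᵀ) = det A + zᵀ (adj A) u` gives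
`det (A + u zᵀ) = (z ⬝ v) (g ⬝ u)`. The Hamiltonian matrix `X = c J z zᵀ` squares to zero
because `zᵀ J z = 0`, so `exp (tX) = 1 + tX` and `det (S exp (tX) - λ) = t c (z ⬝ v) (gᵀ S J z)`.
Choosing `z` off the hyperplanes `v⊥` and `((SJ)ᵀ g)⊥`, and `c = (z ⬝ v) (gᵀ S J z)`, turns this
into `c² t`.
-/

open Matrix Module

theorem NormedSpace.exp_eq_one_add_of_mul_self_eq_zero {𝔸 : Type*} [Ring 𝔸] [Algebra ℚ 𝔸]
    [TopologicalSpace 𝔸] [IsTopologicalRing 𝔸] {a : 𝔸} (ha : a * a = 0) :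
    NormedSpace.exp a = 1 + a := by
  have hpow : ∀ k, a ^ (k + 2) = 0 := fun k => by rw [pow_add, sq, ha, mul_zero]
  rw [NormedSpace.exp_eq_tsum_rat]
  beta_reduce
  rw [tsum_eq_sum (s := Finset.range 2) fun k hk => ?_]
  · simp [Finset.sum_range_succ]
  · obtain ⟨k, rfl⟩ := Nat.exists_eq_add_of_le' (show 2 ≤ k by simp at hk; omega)
    rw [hpow, smul_zero]

theorem exists_dotProduct_ne_zero_and_ne_zero {n R : Type*} [Fintype n] [Semiring R]
    {v p : n → R} (hv : v ≠ 0) (hp : p ≠ 0) : ∃ z, v ⬝ᵥ z ≠ 0 ∧ p ⬝ᵥ z ≠ 0 := by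
  obtain ⟨a, ha⟩ : ∃ a, v ⬝ᵥ a ≠ 0 := not_forall.mp (mt (dotProduct_eq_zero v) hv)
  obtain ⟨b, hb⟩ : ∃ b, p ⬝ᵥ b ≠ 0 := not_forall.mp (mt (dotProduct_eq_zero p) hp)
  by_cases hpa : p ⬝ᵥ a = 0
  · by_cases hvb : v ⬝ᵥ b = 0
    · exact ⟨a + b, by simpa [dotProduct_add, hvb], by simpa [dotProduct_add, hpa]⟩
    · exact ⟨b, hvb, hb⟩
  · exact ⟨a, ha, hpa⟩

namespace Matrix

variable {n R K : Type*} [Fintype n]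

section CommRing

variable [DecidableEq n] [CommRing R]

theorem det_updateRow_eq_vecMul_adjugate (A : Matrix n n R) (i : n) (v : n → R) :
    (A.updateRow i v).det = (v ᵥ* adjugate A) i := by
  rw [← cramer_transpose_apply, cramer_eq_adjugate_mulVec, ← adjugate_transpose,
    mulVec_transpose]

theorem det_add_vecMulVec (A : Matrix n n R) (u v : n → R) :
    (A + vecMulVec u v).det = A.det + v ⬝ᵥ adjugate A *ᵥ u := by
  suffices ∀ s : Finset n, (A + vecMulVec (s.piecewise u 0) v).det =
      A.det + ∑ i ∈ s, u i * (A.updateRow i v).det by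
    rw [dotProduct_mulVec, dotProduct_comm]
    simpa [det_updateRow_eq_vecMul_adjugate, dotProduct] using this Finset.univ
  intro s
  induction s using Finset.induction_on with
  | empty => simp
  | insert k s hk ih =>
    set M := A + vecMulVec (s.piecewise u 0) v
    have hstep : A + vecMulVec ((insert k s).piecewise u 0) v =
        M.updateRow k (M k + u k • v) := by
      ext i j
      by_cases hi : i = k
      · subst hi; simp [M, vecMulVec_apply, hk]
      · simp [M, hi, vecMulVec_apply, Finset.piecewise, Finset.mem_insert]
    have hrow : (M.updateRow k v).det = (A.updateRow k v).det :=
      det_eq_of_forall_row_eq_smul_add_const (s.piecewise u 0) k (by simp [hk]) fun i j => by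
        by_cases hi : i = k
        · subst hi; simp [hk]
        · simp [M, hi, vecMulVec_apply]
    rw [hstep, det_updateRow_add, updateRow_eq_self, det_updateRow_smul, hrow,
      Finset.sum_insert hk, ih]
    ring

theorem det_add_vecMulVec_of_adjugate_eq {A : Matrix n n R} {v g : n → R}
    (hA : A.det = 0) (hadj : adjugate A = vecMulVec v g) (u z : n → R) :
    (A + vecMulVec u z).det = (z ⬝ᵥ v) * (g ⬝ᵥ u) := by
  rw [det_add_vecMulVec, hA, hadj, vecMulVec_mulVec, op_smul_eq_smul, dotProduct_smul,
    smul_eq_mul, zero_add, mul_comm]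

end CommRing

section Field

variable [Field K] {A : Matrix n n K}

theorem exists_ne_zero_forall_mulVec_eq_zero_iff
    (hA : finrank K (LinearMap.ker A.mulVecLin) = 1) :
    ∃ v ≠ 0, ∀ x, A *ᵥ x = 0 ↔ ∃ c : K, c • v = x := by
  obtain ⟨⟨v, hv⟩, hv0, hspan⟩ := finrank_eq_one_iff'.mp hA
  refine ⟨v, by simpa using hv0, fun x => ⟨fun hx => ?_, ?_⟩⟩
  · obtain ⟨c, hc⟩ := hspan ⟨x, hx⟩
    exact ⟨c, congrArg Subtype.val hc⟩
  · rintro ⟨c, rfl⟩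
    rw [mulVec_smul, show A *ᵥ v = 0 from hv, smul_zero]

variable [DecidableEq n]

theorem det_eq_zero_of_finrank_ker_eq_one
    (hA : finrank K (LinearMap.ker A.mulVecLin) = 1) : A.det = 0 := by
  obtain ⟨v, hv0, hker⟩ := exists_ne_zero_forall_mulVec_eq_zero_iff hA
  exact exists_mulVec_eq_zero_iff.mp ⟨v, hv0, (hker v).mpr ⟨1, one_smul K v⟩⟩

theorem adjugate_ne_zero_of_finrank_ker_eq_one
    (hA : finrank K (LinearMap.ker A.mulVecLin) = 1) : adjugate A ≠ 0 := by
  obtain ⟨v, hv0, hker⟩ := exists_ne_zero_forall_mulVec_eq_zero_iff hA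
  have hdet := det_eq_zero_of_finrank_ker_eq_one hA
  obtain ⟨w, hw⟩ : ∃ w, w ∉ Set.range A.mulVec := by
    rw [← Set.ne_univ_iff_exists_notMem, Ne, Set.range_eq_univ, mulVec_surjective_iff_isUnit,
      isUnit_iff_isUnit_det, hdet]
    exact not_isUnit_zero
  obtain ⟨y, hy⟩ : ∃ y, y ⬝ᵥ v ≠ 0 := by
    by_contra! h
    exact hv0 (dotProduct_eq_zero v fun y => by rw [dotProduct_comm, h])
  -- `w ∉ range A` forces a kernel vector of `A + w yᵀ` into `ker A ∩ ker yᵀ = 0`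
  have hdet' : (A + vecMulVec w y).det ≠ 0 := by
    rw [Ne, ← exists_mulVec_eq_zero_iff]
    rintro ⟨x, hx0, hx⟩
    rw [add_mulVec, vecMulVec_mulVec, op_smul_eq_smul] at hx
    have hyx : y ⬝ᵥ x = 0 := by
      by_contra h
      refine hw ⟨-(y ⬝ᵥ x)⁻¹ • x, ?_⟩
      rw [mulVec_smul, eq_neg_of_add_eq_zero_left hx, smul_neg, neg_smul, neg_neg,
        inv_smul_smul₀ h]
    rw [hyx, zero_smul, add_zero, hker] at hx
    obtain ⟨c, rfl⟩ := hx
    rw [dotProduct_smul, smul_eq_mul, mul_eq_zero] at hyx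
    rcases hyx with rfl | h
    · exact hx0 (zero_smul K v)
    · exact hy h
  intro h
  apply hdet'
  rw [det_add_vecMulVec, hdet, h, zero_mulVec, dotProduct_zero, add_zero]

theorem exists_adjugate_eq_vecMulVec_of_finrank_ker_eq_one
    (hA : finrank K (LinearMap.ker A.mulVecLin) = 1) :
    ∃ v g : n → K, v ≠ 0 ∧ g ≠ 0 ∧ adjugate A = vecMulVec v g := by
  obtain ⟨v, hv0, hker⟩ := exists_ne_zero_forall_mulVec_eq_zero_iff hA
  have hdet := det_eq_zero_of_finrank_ker_eq_one hA
  have hcol : ∀ j, ∃ c : K, c • v = adjugate A *ᵥ Pi.single j 1 := fun j => by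
    rw [← hker, mulVec_mulVec, mul_adjugate, hdet, zero_smul, zero_mulVec]
  choose g hg using hcol
  have hadj : adjugate A = vecMulVec v g := by
    ext i j
    simpa [mulVec_single, vecMulVec_apply, mul_comm] using (congrFun (hg j) i).symm
  refine ⟨v, g, hv0, fun hg0 => ?_, hadj⟩
  exact adjugate_ne_zero_of_finrank_ker_eq_one hA (by rw [hadj, hg0, vecMulVec_zero])

end Field

section Symplectic

variable {l : Type*} [Fintype l] [DecidableEq l] [CommRing R]

theorem transpose_mul_J_add_J_mul_eq_zero {H : Matrix (l ⊕ l) (l ⊕ l) R} (hH : Hᵀ = H) :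
    (J l R * H)ᵀ * J l R + J l R * (J l R * H) = 0 := by
  rw [transpose_mul, hH, J_transpose, Matrix.mul_assoc, Matrix.neg_mul, J_squared,
    ← Matrix.mul_assoc, J_squared]
  simp

theorem dotProduct_J_mulVec_self (z : l ⊕ l → R) : z ⬝ᵥ J l R *ᵥ z = 0 := by
  simp [J, dotProduct, mulVec, Fintype.sum_sum_type, one_apply, mul_comm]

theorem J_mul_vecMulVec_self_mul_self (z : l ⊕ l → R) :
    J l R * vecMulVec z z * (J l R * vecMulVec z z) = 0 := by
  rw [mul_vecMulVec, vecMulVec_mul_vecMulVec, dotProduct_J_mulVec_self, zero_smul,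
    vecMulVec_zero]

end Symplectic

end Matrix

theorem exists_symplectic_direction_det_deriv_pos_general
    (N : ℕ)
    (S : Matrix (Fin N ⊕ Fin N) (Fin N ⊕ Fin N) ℝ)
    (hS : Sᵀ * Matrix.J (Fin N) ℝ * S = Matrix.J (Fin N) ℝ)
    (lam : ℝ)
    (heig : ((S - lam • (1 : Matrix (Fin N ⊕ Fin N) (Fin N ⊕ Fin N) ℝ)).det = 0))
    (hgeom : Module.finrank ℝ
      ↥(LinearMap.ker (S - lam • (1 : Matrix (Fin N ⊕ Fin N) (Fin N ⊕ Fin N) ℝ)).mulVecLin)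
      = 1) :
    ∃ X : Matrix (Fin N ⊕ Fin N) (Fin N ⊕ Fin N) ℝ,
      Xᵀ * Matrix.J (Fin N) ℝ + Matrix.J (Fin N) ℝ * X = 0 ∧
      0 < deriv (fun t : ℝ =>
        (S * NormedSpace.exp (t • X)
          - lam • (1 : Matrix (Fin N ⊕ Fin N) (Fin N ⊕ Fin N) ℝ)).det) 0 := by
  set J := Matrix.J (Fin N) ℝ
  obtain ⟨v, g, hv, hg, hadj⟩ := exists_adjugate_eq_vecMulVec_of_finrank_ker_eq_one hgeom
  set p := g ᵥ* (S * J)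
  have hSJ : S * J ∈ symplecticGroup (Fin N) ℝ :=
    mul_mem (SymplecticGroup.mem_iff'.mpr hS) (SymplecticGroup.J_mem _ _)
  have hp : p ≠ 0 := by
    simpa [p] using (vecMul_injective_iff_isUnit.mpr
      ((isUnit_iff_isUnit_det _).mpr (SymplecticGroup.symplectic_det hSJ))).ne hg
  obtain ⟨z, hvz, hpz⟩ := exists_dotProduct_ne_zero_and_ne_zero hv hp
  set X₀ := J * vecMulVec z z
  set c := (v ⬝ᵥ z) * (p ⬝ᵥ z)
  refine ⟨c • X₀, ?_, ?_⟩
  · rw [transpose_smul, Matrix.smul_mul, Matrix.mul_smul, ← smul_add,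
      transpose_mul_J_add_J_mul_eq_zero (transpose_vecMulVec z z), smul_zero]
  · have hdet : ∀ t : ℝ, (S * NormedSpace.exp (t • c • X₀) - lam • 1).det = c ^ 2 * t := by
      intro t
      have hexp : NormedSpace.exp (t • c • X₀) = 1 + (t * c) • X₀ := by
        rw [smul_smul, NormedSpace.exp_eq_one_add_of_mul_self_eq_zero]
        rw [smul_mul_smul_comm, J_mul_vecMulVec_self_mul_self, smul_zero]
      have hrank_one : S * (1 + (t * c) • X₀) - lam • 1 =
          (S - lam • 1) + vecMulVec ((t * c) • (S * J) *ᵥ z) z := by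
        rw [Matrix.mul_add, Matrix.mul_one, Matrix.mul_smul, ← Matrix.mul_assoc, mul_vecMulVec,
          smul_vecMulVec]
        abel
      rw [hexp, hrank_one, det_add_vecMulVec_of_adjugate_eq heig hadj, dotProduct_smul,
        dotProduct_mulVec, smul_eq_mul, dotProduct_comm z v]
      ring
    have hc : c ≠ 0 := mul_ne_zero hvz hpz
    simp_rw [hdet]
    rw [((hasDerivAt_id' 0).const_mul (c ^ 2)).deriv, mul_one]
    positivity

/-- Let `S` be a real symplectic `2N×2N` matrix and `0 < λ ≤ 1` an
eigenvalue of `S` of geometric multiplicity `1`. Then there exists `X` in the symplectic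
Lie algebra such that `d/dt|₀ det(S·exp(tX) − λI) > 0`. -/
theorem exists_symplectic_direction_det_deriv_pos
    (N : ℕ) (hN : 1 ≤ N)
    (S : Matrix (Fin N ⊕ Fin N) (Fin N ⊕ Fin N) ℝ)
    (hS : Sᵀ * Matrix.J (Fin N) ℝ * S = Matrix.J (Fin N) ℝ)
    (lam : ℝ) (hlam0 : 0 < lam) (hlam1 : lam ≤ 1)
    (heig : ((S - lam • (1 : Matrix (Fin N ⊕ Fin N) (Fin N ⊕ Fin N) ℝ)).det = 0))
    (hgeom : Module.finrank ℝ
      ↥(LinearMap.ker (S - lam • (1 : Matrix (Fin N ⊕ Fin N) (Fin N ⊕ Fin N) ℝ)).mulVecLin)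
      = 1) :
    ∃ X : Matrix (Fin N ⊕ Fin N) (Fin N ⊕ Fin N) ℝ,
      Xᵀ * Matrix.J (Fin N) ℝ + Matrix.J (Fin N) ℝ * X = 0 ∧
      0 < deriv (fun t : ℝ =>
        (S * NormedSpace.exp (t • X)
          - lam • (1 : Matrix (Fin N ⊕ Fin N) (Fin N ⊕ Fin N) ℝ)).det) 0 :=
  exists_symplectic_direction_det_deriv_pos_general N S hS lam heig hgeom
end

section
/- Let N ≥ 1 and let Q be a real symplectic 2N×2N matrix such that 1 is an eigenvalue of Q of geometric multiplicity 1 (dim ker(Q − I) = 1). Then there exist ε > 0 and a continuous path γ : ℝ → (2N×2N real matrices) with γ(0) = Q, such that γ(t) is symplectic for every t, and det(γ(t) − e^{−t}·I) = 0 for all t with |t| < ε; in particular e^{−t} is an eigenvalue of γ(t) for all small t. -/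
open Matrix

variable {n : Type*} [Fintype n] [DecidableEq n]

lemma vmv_mul (a b : n → ℝ) (M : Matrix n n ℝ) :
    vecMulVec a b * M = vecMulVec a (Mᵀ *ᵥ b) := by
  ext i j
  simp only [vecMulVec_apply, mul_apply, mulVec, dotProduct, transpose_apply, Finset.mul_sum]
  exact Finset.sum_congr rfl fun k _ => by ring

lemma mul_vmv (a b : n → ℝ) (M : Matrix n n ℝ) :
    M * vecMulVec a b = vecMulVec (M *ᵥ a) b := by
  ext i j
  simp only [vecMulVec_apply, mul_apply, mulVec, dotProduct, Finset.sum_mul]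
  exact Finset.sum_congr rfl fun k _ => by ring

lemma vmv_mul_vmv (a b c d : n → ℝ) :
    vecMulVec a b * vecMulVec c d = (b ⬝ᵥ c) • vecMulVec a d := by
  classical
  ext i j
  simp [vecMulVec_apply, mul_apply, dotProduct, Finset.sum_mul, Finset.mul_sum, mul_comm,
    mul_assoc, mul_left_comm]

lemma vmv_transpose (a b : n → ℝ) : (vecMulVec a b)ᵀ = vecMulVec b a := by
  ext i j; simp [vecMulVec_apply, mul_comm]

lemma vmv_mulVec (a b x : n → ℝ) : vecMulVec a b *ᵥ x = (b ⬝ᵥ x) • a := by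
  ext i
  simp only [vecMulVec_apply, mulVec, dotProduct, Pi.smul_apply, smul_eq_mul, Finset.sum_mul,
    Finset.mul_sum]
  exact Finset.sum_congr rfl fun k _ => by ring

lemma neg_vmv (a b : n → ℝ) : vecMulVec (-a) b = -vecMulVec a b := by
  ext i j; simp [vecMulVec_apply]

lemma J_skew {N : ℕ} (x y : Fin N ⊕ Fin N → ℝ) :
    (Matrix.J (Fin N) ℝ)ᵀ *ᵥ x ⬝ᵥ y = -((Matrix.J (Fin N) ℝ)ᵀ *ᵥ y ⬝ᵥ x) := by
  have h : ∀ z : Fin N ⊕ Fin N → ℝ,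
      Matrix.J (Fin N) ℝ *ᵥ z = -((Matrix.J (Fin N) ℝ)ᵀ *ᵥ z) := by
    intro z; rw [Matrix.J_transpose, neg_mulVec, neg_neg]
  rw [mulVec_transpose, ← dotProduct_mulVec, h, dotProduct_neg, dotProduct_comm x]

lemma J_skew_self {N : ℕ} (x : Fin N ⊕ Fin N → ℝ) :
    (Matrix.J (Fin N) ℝ)ᵀ *ᵥ x ⬝ᵥ x = 0 := by
  have := J_skew x x; linarith

/-- Let `Q` be a real symplectic `2N×2N` matrix with `1` an eigenvalue of
geometric multiplicity `1`. Then there exist `ε > 0` and a continuous path `γ` of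
symplectic matrices with `γ(0) = Q` such that `e^{−t}` is an eigenvalue of `γ(t)` for all
`|t| < ε`. -/
theorem exists_symplectic_path_eigenvalue_exp_neg
    (N : ℕ) (hN : 1 ≤ N)
    (Q : Matrix (Fin N ⊕ Fin N) (Fin N ⊕ Fin N) ℝ)
    (hQ : Qᵀ * Matrix.J (Fin N) ℝ * Q = Matrix.J (Fin N) ℝ)
    (hgeom : Module.finrank ℝ
      ↥(LinearMap.ker (Q - (1 : Matrix (Fin N ⊕ Fin N) (Fin N ⊕ Fin N) ℝ)).mulVecLin)
      = 1) :
    ∃ ε : ℝ, 0 < ε ∧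
      ∃ γ : ℝ → Matrix (Fin N ⊕ Fin N) (Fin N ⊕ Fin N) ℝ,
        Continuous γ ∧
        γ 0 = Q ∧
        (∀ t : ℝ, (γ t)ᵀ * Matrix.J (Fin N) ℝ * γ t = Matrix.J (Fin N) ℝ) ∧
        (∀ t : ℝ, |t| < ε →
          (γ t - Real.exp (-t) • (1 : Matrix (Fin N ⊕ Fin N) (Fin N ⊕ Fin N) ℝ)).det
            = 0) := by
  set Jm : Matrix (Fin N ⊕ Fin N) (Fin N ⊕ Fin N) ℝ := Matrix.J (Fin N) ℝ with hJm
  have hJT : Jmᵀ = -Jm := by rw [hJm]; exact Matrix.J_transpose _ _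
  have hJJ : Jm * Jm = -1 := by rw [hJm]; exact Matrix.J_squared _ _
  -- an eigenvector for eigenvalue 1
  have hker : LinearMap.ker (Q - (1 : Matrix (Fin N ⊕ Fin N) (Fin N ⊕ Fin N) ℝ)).mulVecLin ≠ ⊥ := by
    intro h
    rw [h, finrank_bot] at hgeom
    exact zero_ne_one hgeom
  obtain ⟨v, hvker, hv0⟩ := Submodule.exists_mem_ne_zero_of_ne_bot hker
  have hQv : Q *ᵥ v = v := by
    have : (Q - 1) *ᵥ v = 0 := hvker
    rw [sub_mulVec, one_mulVec, sub_eq_zero] at this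
    exact this
  -- a symplectic partner for `v`
  set u₁ : Fin N ⊕ Fin N → ℝ := Jmᵀ *ᵥ v with hu₁
  have hu₁ne : u₁ ≠ 0 := by
    intro h
    apply hv0
    rw [hu₁] at h
    have hJv : Jm *ᵥ v = 0 := by
      rw [hJT, neg_mulVec, neg_eq_zero] at h
      exact h
    have h2 : (Jm * Jm) *ᵥ v = 0 := by rw [← mulVec_mulVec, hJv, mulVec_zero]
    rw [hJJ, neg_mulVec, one_mulVec, neg_eq_zero] at h2
    exact h2
  set c : ℝ := u₁ ⬝ᵥ u₁ with hc
  have hcne : c ≠ 0 := fun h => hu₁ne ((dotProduct_self_eq_zero).mp h)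
  set w : Fin N ⊕ Fin N → ℝ := c⁻¹ • u₁ with hw
  set u₂ : Fin N ⊕ Fin N → ℝ := Jmᵀ *ᵥ w with hu₂
  -- scalar identities
  have hs1 : u₁ ⬝ᵥ v = 0 := J_skew_self v
  have hs2 : u₂ ⬝ᵥ w = 0 := J_skew_self w
  have hs3 : u₁ ⬝ᵥ w = 1 := by
    have h1 : u₁ ⬝ᵥ w = c⁻¹ * c := by
      rw [hw, dotProduct_smul, smul_eq_mul, ← hc]
    rw [h1, inv_mul_cancel₀ hcne]
  have hs4 : u₂ ⬝ᵥ v = -1 := by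
    have h1 : (Matrix.J (Fin N) ℝ)ᵀ *ᵥ w ⬝ᵥ v = -((Matrix.J (Fin N) ℝ)ᵀ *ᵥ v ⬝ᵥ w) := J_skew w v
    rw [hu₂, hJm, h1, ← hJm, ← hu₁, hs3]
  -- the symplectic shear in the plane spanned by `v` and `w`
  set A : Matrix (Fin N ⊕ Fin N) (Fin N ⊕ Fin N) ℝ := vecMulVec v u₂ with hA
  set B : Matrix (Fin N ⊕ Fin N) (Fin N ⊕ Fin N) ℝ := vecMulVec w u₁ with hB
  have hJv : Jm *ᵥ v = -u₁ := by rw [hu₁, hJT, neg_mulVec, neg_neg]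
  have hJw : Jm *ᵥ w = -u₂ := by rw [hu₂, hJT, neg_mulVec, neg_neg]
  have key : ∀ a b : ℝ, a + b + a * b = 0 →
      (1 - a • A + b • B)ᵀ * Jm * (1 - a • A + b • B) = Jm := by
    intro a b hab
    have h1 : Jm * vecMulVec v u₂ = -vecMulVec u₁ u₂ := by rw [mul_vmv, hJv, neg_vmv]
    have h2 : Jm * vecMulVec w u₁ = -vecMulVec u₂ u₁ := by rw [mul_vmv, hJw, neg_vmv]
    have h3 : vecMulVec u₂ v * Jm = vecMulVec u₂ u₁ := by rw [vmv_mul, ← hu₁]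
    have h4 : vecMulVec u₁ w * Jm = vecMulVec u₁ u₂ := by rw [vmv_mul, ← hu₂]
    have hab' : a + b + a * b = 0 := hab
    simp only [hA, hB, transpose_add, transpose_sub, transpose_one, transpose_smul,
      vmv_transpose]
    simp only [sub_mul, add_mul, mul_sub, mul_add, one_mul, mul_one, smul_mul_assoc,
      mul_smul_comm, h1, h2, h3, h4, vmv_mul_vmv, hs1, hs2, hs3, hs4, smul_smul]
    have hcomb : a * b + a + b = 0 := by linarith
    match_scalars <;> linarith
  refine ⟨1, one_pos, fun t =>
      (1 - (Real.exp (-t) - 1) • A + (Real.exp t - 1) • B) * Q, ?_, ?_, ?_, ?_⟩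
  · apply Continuous.matrix_mul _ continuous_const
    apply Continuous.add
    · exact continuous_const.sub
        (((Real.continuous_exp.comp continuous_neg).sub continuous_const).smul continuous_const)
    · exact ((Real.continuous_exp.sub continuous_const).smul continuous_const)
  · simp
  · intro t
    have hab : (Real.exp (-t) - 1) + (Real.exp t - 1) + (Real.exp (-t) - 1) * (Real.exp t - 1)
        = 0 := by
      have h : Real.exp (-t) * Real.exp t = 1 := by
        rw [← Real.exp_add]; simp
      nlinarith [h]
    have hk := key _ _ hab
    calc ((1 - (Real.exp (-t) - 1) • A + (Real.exp t - 1) • B) * Q)ᵀ * Jm *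
          ((1 - (Real.exp (-t) - 1) • A + (Real.exp t - 1) • B) * Q)
        = Qᵀ * ((1 - (Real.exp (-t) - 1) • A + (Real.exp t - 1) • B)ᵀ * Jm *
            (1 - (Real.exp (-t) - 1) • A + (Real.exp t - 1) • B)) * Q := by
          rw [transpose_mul]; simp only [Matrix.mul_assoc]
      _ = Jm := by rw [hk, hQ]
  · intro t _
    rw [← Matrix.exists_mulVec_eq_zero_iff]
    refine ⟨v, hv0, ?_⟩
    have hMv : (1 - (Real.exp (-t) - 1) • A + (Real.exp t - 1) • B) *ᵥ v
        = Real.exp (-t) • v := by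
      simp only [add_mulVec, sub_mulVec, one_mulVec, smul_mulVec, hA, hB, vmv_mulVec,
        hs4, hs1]
      module
    rw [sub_mulVec, ← mulVec_mulVec, hQv, hMv, smul_mulVec, one_mulVec, sub_self]
end

section
/- Let N ≥ 1. The set of real symplectic 2N×2N matrices S such that every positive real eigenvalue of S has geometric multiplicity at most 1 (i.e. for every real λ > 0, dim ker(S − λ·I) ≤ 1) is an open subset of the real symplectic group Sp(2N, ℝ), in the subspace topology induced from the space of 2N×2N real matrices. -/
/-!
The dimension of a kernel is upper semicontinuous, so for a fixed `λ` the condition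
`dim ker (A - λ) ≤ 1` is open in `(A, λ)`. To make it open in `A` uniformly over all `λ > 0`,
note that near an invertible `A₀` every eigenvalue satisfies `|λ| ≤ ‖A‖` and `|λ|⁻¹ ≤ ‖A⁻¹‖`,
so the positive eigenvalues stay in a fixed compact interval `[C⁻¹, C]`, and the tube lemma
applies. Symplectic matrices are invertible, with inverse `-J Aᵀ J` depending continuously on `A`.
-/

open Matrix Module LinearMap Topology

theorem spectrum.norm_inv_le_of_mem_units {𝕜 A : Type*} [NontriviallyNormedField 𝕜] [NormedRing A]
    [NormedAlgebra 𝕜 A] [CompleteSpace A] {a : Aˣ} {μ : 𝕜} (hμ : μ ∈ spectrum 𝕜 (a : A)) :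
    ‖μ‖⁻¹ ≤ ‖(↑a⁻¹ : A)‖ * ‖(1 : A)‖ := by
  have hμ0 : μ ≠ 0 := spectrum.ne_zero_of_mem_of_unit hμ
  have hinv : μ⁻¹ ∈ spectrum 𝕜 (↑a⁻¹ : A) := spectrum.inv_mem_iff (r := Units.mk0 μ hμ0) |>.mp hμ
  simpa using spectrum.subset_closedBall_norm_mul _ hinv

namespace Matrix

section Kernel

variable {m n 𝕜 : Type*} [Fintype m] [Fintype n] [DecidableEq n]

theorem isOpen_setOf_finrank_ker_mulVecLin_le [NontriviallyNormedField 𝕜] [CompleteSpace 𝕜]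
    (k : ℕ) : IsOpen {A : Matrix m n 𝕜 | finrank 𝕜 (ker A.mulVecLin) ≤ k} := by
  have hcont : Continuous fun A : Matrix m n 𝕜 ↦ LinearMap.toContinuousLinearMap A.mulVecLin :=
    LinearMap.continuous_of_finiteDimensional (LinearMap.toContinuousLinearMap.toLinearMap ∘ₗ
      Matrix.toLin'.toLinearMap : Matrix m n 𝕜 →ₗ[𝕜] (n → 𝕜) →L[𝕜] (m → 𝕜))
  convert (isOpen_setOfPred_nat_le_rank (Fintype.card n - k)).preimage hcont using 1
  ext A
  change _ ≤ k ↔ ((Fintype.card n - k : ℕ) : Cardinal) ≤ A.mulVecLin.rank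
  have hrank := LinearMap.finrank_range_add_finrank_ker A.mulVecLin
  rw [finrank_fintype_fun_eq_card] at hrank
  rw [LinearMap.rank, ← finrank_eq_rank, Nat.cast_le]
  omega

theorem mem_spectrum_of_ker_ne_bot [Field 𝕜] {A : Matrix n n 𝕜} {μ : 𝕜}
    (h : ker (A - μ • 1).mulVecLin ≠ ⊥) : μ ∈ spectrum 𝕜 A := by
  rw [spectrum.mem_iff, Algebra.algebraMap_eq_smul_one, ← neg_sub, IsUnit.neg_iff,
    ← mulVec_injective_iff_isUnit]
  exact fun hinj ↦ h (ker_eq_bot.mpr hinj)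

attribute [local instance] Matrix.linftyOpNormedRing Matrix.linftyOpNormedAlgebra

theorem isOpen_setOf_units_finrank_ker_sub_smul_le (k : ℕ) :
    IsOpen {A : (Matrix n n ℝ)ˣ |
      ∀ lam : ℝ, 0 < lam → finrank ℝ (ker ((A : Matrix n n ℝ) - lam • 1).mulVecLin) ≤ k} := by
  rw [isOpen_iff_eventually]
  intro A₀ hA₀
  set ρ : (Matrix n n ℝ)ˣ → ℝ := fun A ↦
    ‖(A : Matrix n n ℝ)‖ * ‖(1 : Matrix n n ℝ)‖ + ‖(↑A⁻¹ : Matrix n n ℝ)‖ * ‖(1 : Matrix n n ℝ)‖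
  have hρ : Continuous ρ := by fun_prop
  set C := ρ A₀ + 1
  have hC : 0 < C := by positivity
  have hbound : ∀ᶠ A : (Matrix n n ℝ)ˣ in 𝓝 A₀, ρ A < C :=
    hρ.continuousAt.eventually_lt continuousAt_const (lt_add_one _)
  have hcompact : ∀ᶠ A : (Matrix n n ℝ)ˣ in 𝓝 A₀, ∀ lam ∈ Set.Icc C⁻¹ C,
      finrank ℝ (ker ((A : Matrix n n ℝ) - lam • 1).mulVecLin) ≤ k := by
    refine isCompact_Icc.eventually_forall_of_forall_eventually fun lam hlam ↦ ?_
    have hcont : Continuous fun z : (Matrix n n ℝ)ˣ × ℝ ↦ (z.1 : Matrix n n ℝ) - z.2 • 1 := by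
      fun_prop
    exact ((isOpen_setOf_finrank_ker_mulVecLin_le k).preimage hcont).mem_nhds
      (hA₀ lam ((inv_pos.mpr hC).trans_le hlam.1))
  filter_upwards [hbound, hcompact] with A hAC hA lam hlam
  by_contra! hk
  have hmem : lam ∈ spectrum ℝ (A : Matrix n n ℝ) :=
    mem_spectrum_of_ker_ne_bot fun hbot ↦ by rw [hbot] at hk; simp at hk
  have hle := spectrum.subset_closedBall_norm_mul (𝕜 := ℝ) _ hmem
  have hinv_le := spectrum.norm_inv_le_of_mem_units hmem
  rw [mem_closedBall_zero_iff, Real.norm_of_nonneg hlam.le] at hle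
  rw [Real.norm_of_nonneg hlam.le] at hinv_le
  have h₁ : 0 ≤ ‖(A : Matrix n n ℝ)‖ * ‖(1 : Matrix n n ℝ)‖ := by positivity
  have h₂ : 0 ≤ ‖(↑A⁻¹ : Matrix n n ℝ)‖ * ‖(1 : Matrix n n ℝ)‖ := by positivity
  exact (hA lam ⟨inv_le_of_inv_le₀ hlam (by linarith), by linarith⟩).not_gt hk

end Kernel

section Symplectic

variable {l R : Type*} [Fintype l] [DecidableEq l] [CommRing R]

def symplecticToUnits (A : {A : Matrix (l ⊕ l) (l ⊕ l) R // Aᵀ * J l R * A = J l R}) :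
    (Matrix (l ⊕ l) (l ⊕ l) R)ˣ :=
  have hinv : -J l R * (A : Matrix (l ⊕ l) (l ⊕ l) R)ᵀ * J l R * A = 1 := by
    simpa only [Matrix.neg_mul] using
      SymplecticGroup.inv_left_mul_aux (SymplecticGroup.mem_iff'.mpr A.2)
  ⟨A, -J l R * (A : Matrix (l ⊕ l) (l ⊕ l) R)ᵀ * J l R, mul_eq_one_comm.mp hinv, hinv⟩

theorem continuous_symplecticToUnits [TopologicalSpace R] [IsTopologicalRing R] :
    Continuous (symplecticToUnits (l := l) (R := R)) :=
  Units.continuous_iff.mpr ⟨continuous_subtype_val,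
    (continuous_const.matrix_mul continuous_subtype_val.matrix_transpose).matrix_mul
      continuous_const⟩

end Symplectic

end Matrix

theorem isOpen_symplectic_geomMult_le_one_general
    (N : ℕ) :
    IsOpen {S : {A : Matrix (Fin N ⊕ Fin N) (Fin N ⊕ Fin N) ℝ //
        Aᵀ * Matrix.J (Fin N) ℝ * A = Matrix.J (Fin N) ℝ} |
      ∀ lam : ℝ, 0 < lam →
        Module.finrank ℝ ↥(LinearMap.ker
          ((S : Matrix (Fin N ⊕ Fin N) (Fin N ⊕ Fin N) ℝ)
            - lam • (1 : Matrix (Fin N ⊕ Fin N) (Fin N ⊕ Fin N) ℝ)).mulVecLin) ≤ 1} :=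
  (isOpen_setOf_units_finrank_ker_sub_smul_le 1).preimage continuous_symplecticToUnits

/-- Within the real symplectic group `Sp(2N, ℝ)` (with the subspace
topology from the space of `2N×2N` real matrices), the set of matrices all of whose
positive real eigenvalues have geometric multiplicity at most `1` is open. -/
theorem isOpen_symplectic_geomMult_le_one
    (N : ℕ) (hN : 1 ≤ N) :
    IsOpen {S : {A : Matrix (Fin N ⊕ Fin N) (Fin N ⊕ Fin N) ℝ //
        Aᵀ * Matrix.J (Fin N) ℝ * A = Matrix.J (Fin N) ℝ} |
      ∀ lam : ℝ, 0 < lam →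
        Module.finrank ℝ ↥(LinearMap.ker
          ((S : Matrix (Fin N ⊕ Fin N) (Fin N ⊕ Fin N) ℝ)
            - lam • (1 : Matrix (Fin N ⊕ Fin N) (Fin N ⊕ Fin N) ℝ)).mulVecLin) ≤ 1} :=
  isOpen_symplectic_geomMult_le_one_general N
end

section
/- Let d ≥ 1, let A be a real orthogonal d×d matrix, and let R : ℝ → (d×d real matrices) be continuous on [0, 2π] with R(t) symmetric for every t ∈ [0, 2π]. Suppose X : ℝ → ℝ^d is twice continuously differentiable with X(2π) = A·X(0), and suppose that for every continuously differentiable Y : ℝ → ℝ^d with Y(2π) = A·Y(0) one has ∫₀^{2π} ( ⟨X'(t), Y'(t)⟩ − ⟨R(t)·X(t), Y(t)⟩ ) dt = 0. Then X''(t) + R(t)·X(t) = 0 for all t ∈ [0, 2π], and moreover X'(2π) = A·X'(0). -/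
/-!
Integrating `⟨X', Y'⟩` by parts turns the index form into the boundary term
`⟨X'(2π), Y(2π)⟩ - ⟨X'(0), Y(0)⟩` minus `∫ ⟨X'' + R X, Y⟩`. Testing against fields that vanish at
both ends, the fundamental lemma of the calculus of variations gives `X'' + R X = 0`. Testing
then against the affine field from `v` to `A v` leaves `⟨X'(2π), A v⟩ = ⟨X'(0), v⟩` for every
`v`, that is `Aᵀ X'(2π) = X'(0)`, and `A` is orthogonal.
-/

open Matrix Real Set MeasureTheory

section

variable {ι : Type*} [Fintype ι]

theorem HasDerivAt.dotProduct {u v : ℝ → ι → ℝ} {u' v' : ι → ℝ} {t : ℝ}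
    (hu : HasDerivAt u u' t) (hv : HasDerivAt v v' t) :
    HasDerivAt (fun s => u s ⬝ᵥ v s) (u' ⬝ᵥ v t + u t ⬝ᵥ v') t := by
  simpa [_root_.dotProduct, Finset.sum_add_distrib] using
    HasDerivAt.fun_sum fun i (_ : i ∈ Finset.univ) =>
      (hasDerivAt_pi.mp hu i).mul (hasDerivAt_pi.mp hv i)

theorem ContinuousOn.dotProduct {α : Type*} [TopologicalSpace α] {u v : α → ι → ℝ}
    {s : Set α} (hu : ContinuousOn u s) (hv : ContinuousOn v s) :
    ContinuousOn (fun t => u t ⬝ᵥ v t) s :=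
  (continuous_fst.dotProduct continuous_snd).comp_continuousOn (hu.prodMk hv)

theorem ContinuousOn.matrix_mulVec {α : Type*} [TopologicalSpace α] {M : α → Matrix ι ι ℝ}
    {v : α → ι → ℝ} {s : Set α} (hM : ContinuousOn M s) (hv : ContinuousOn v s) :
    ContinuousOn (fun t => M t *ᵥ v t) s :=
  (continuous_fst.matrix_mulVec continuous_snd).comp_continuousOn (hM.prodMk hv)

theorem integral_deriv_dotProduct_deriv_sub_mulVec_dotProduct {R : ℝ → Matrix ι ι ℝ}
    {X Y : ℝ → ι → ℝ} {a b : ℝ} (hab : a ≤ b) (hR : ContinuousOn R (Icc a b))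
    (hX : ContDiff ℝ 2 X) (hY : ContDiff ℝ 1 Y) :
    ∫ t in a..b, (deriv X t ⬝ᵥ deriv Y t - R t *ᵥ X t ⬝ᵥ Y t) =
      deriv X b ⬝ᵥ Y b - deriv X a ⬝ᵥ Y a -
        ∫ t in a..b, (deriv (deriv X) t + R t *ᵥ X t) ⬝ᵥ Y t := by
  have hX' : ContDiff ℝ 1 (deriv X) := hX.iterate_deriv' 1 1
  have hXY' : IntervalIntegrable (fun t => deriv X t ⬝ᵥ deriv Y t) volume a b :=
    (hX'.continuous.dotProduct (hY.continuous_deriv le_rfl)).intervalIntegrable a b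
  have hX''Y : IntervalIntegrable (fun t => deriv (deriv X) t ⬝ᵥ Y t) volume a b :=
    ((hX'.continuous_deriv le_rfl).dotProduct hY.continuous).intervalIntegrable a b
  have hRXY : IntervalIntegrable (fun t => R t *ᵥ X t ⬝ᵥ Y t) volume a b :=
    ((hR.matrix_mulVec hX.continuous.continuousOn).dotProduct
      hY.continuous.continuousOn).intervalIntegrable_of_Icc hab
  have hparts : ∫ t in a..b, (deriv (deriv X) t ⬝ᵥ Y t + deriv X t ⬝ᵥ deriv Y t) =
      deriv X b ⬝ᵥ Y b - deriv X a ⬝ᵥ Y a :=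
    intervalIntegral.integral_eq_sub_of_hasDerivAt
      (fun t _ => (hX'.differentiable one_ne_zero t).hasDerivAt.dotProduct
        (hY.differentiable one_ne_zero t).hasDerivAt) (hX''Y.add hXY')
  simp only [add_dotProduct]
  rw [intervalIntegral.integral_add hX''Y hXY'] at hparts
  rw [intervalIntegral.integral_sub hXY' hRXY, intervalIntegral.integral_add hX''Y hRXY]
  linarith

theorem eqOn_zero_of_forall_integral_mul_eq_zero {g : ℝ → ℝ} {a b : ℝ} (hab : a < b)
    (hg : ContinuousOn g (Icc a b))
    (h : ∀ ψ : ℝ → ℝ, ContDiff ℝ 1 ψ → ψ a = 0 → ψ b = 0 →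
      ∫ t in a..b, ψ t * g t = 0) :
    EqOn g 0 (Icc a b) := by
  have hgIoo : ContinuousOn g (Ioo a b) := hg.mono Ioo_subset_Icc_self
  have hae : ∀ᵐ t, t ∈ Ioo a b → g t = 0 := by
    refine isOpen_Ioo.ae_eq_zero_of_integral_contDiff_smul_eq_zero
      (hgIoo.locallyIntegrableOn measurableSet_Ioo) fun ψ hψ _ hψab => ?_
    have hψ_out : ∀ t ∉ Ioo a b, ψ t = 0 := fun t ht =>
      image_eq_zero_of_notMem_tsupport fun h' => ht (hψab h')
    have hψ_out' : ∀ t ∉ Ioc a b, ψ t • g t = 0 := fun t ht => by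
      rw [hψ_out t fun h' => ht (Ioo_subset_Ioc_self h'), zero_smul]
    rw [← setIntegral_eq_integral_of_forall_compl_eq_zero hψ_out',
      ← intervalIntegral.integral_of_le hab.le]
    exact h ψ (hψ.of_le (by norm_cast)) (hψ_out a fun h' => lt_irrefl a h'.1)
      (hψ_out b fun h' => lt_irrefl b h'.2)
  have hIoo : EqOn g 0 (Ioo a b) :=
    Measure.eqOn_open_of_ae_eq ((ae_restrict_iff' measurableSet_Ioo).mpr hae) isOpen_Ioo hgIoo
      continuousOn_const
  exact hIoo.of_subset_closure hg continuousOn_const Ioo_subset_Icc_self (closure_Ioo hab.ne).ge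

theorem eqOn_zero_of_forall_integral_dotProduct_eq_zero {F : ℝ → ι → ℝ} {a b : ℝ} (hab : a < b)
    (hF : ContinuousOn F (Icc a b))
    (h : ∀ Y : ℝ → ι → ℝ, ContDiff ℝ 1 Y → Y a = 0 → Y b = 0 →
      ∫ t in a..b, F t ⬝ᵥ Y t = 0) :
    EqOn F 0 (Icc a b) := by
  have hcomp (v : ι → ℝ) : EqOn (fun t => F t ⬝ᵥ v) 0 (Icc a b) :=
    eqOn_zero_of_forall_integral_mul_eq_zero hab (hF.dotProduct continuousOn_const)
      fun ψ hψ ha hb => by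
        simpa [dotProduct_smul, mul_comm] using
          h (fun t => ψ t • v) (hψ.smul contDiff_const) (by simp [ha]) (by simp [hb])
  exact fun t ht => dotProduct_self_eq_zero.mp (hcomp (F t) ht)

end

theorem Matrix.eq_mulVec_of_forall_dotProduct_mulVec_eq {ι R : Type*} [Fintype ι]
    [DecidableEq ι] [CommRing R] {A : Matrix ι ι R} (hA : Aᵀ * A = 1) {u w : ι → R}
    (h : ∀ v, w ⬝ᵥ A *ᵥ v = u ⬝ᵥ v) : w = A *ᵥ u := by
  have hu : w ᵥ* A = u := dotProduct_eq _ _ fun v => by rw [← dotProduct_mulVec, h]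
  rw [← hu, mulVec_vecMul, mul_eq_one_comm.mp hA, one_mulVec]

theorem kernel_of_index_form_is_periodic_jacobi_field_general
    (d : ℕ)
    (A : Matrix (Fin d) (Fin d) ℝ) (hA : Aᵀ * A = 1)
    (R : ℝ → Matrix (Fin d) (Fin d) ℝ)
    (hRcont : ContinuousOn R (Set.Icc 0 (2 * π)))
    (X : ℝ → (Fin d → ℝ))
    (hX : ContDiff ℝ 2 X)
    (hker : ∀ Y : ℝ → (Fin d → ℝ), ContDiff ℝ 1 Y → Y (2 * π) = A.mulVec (Y 0) →
      ∫ t in (0 : ℝ)..(2 * π),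
        (deriv X t ⬝ᵥ deriv Y t - (R t).mulVec (X t) ⬝ᵥ Y t) = 0) :
    (∀ t ∈ Set.Icc (0 : ℝ) (2 * π),
      deriv (deriv X) t + (R t).mulVec (X t) = 0) ∧
    deriv X (2 * π) = A.mulVec (deriv X 0) := by
  set J := fun t => deriv (deriv X) t + R t *ᵥ X t
  have hJ : ContinuousOn J (Icc 0 (2 * π)) :=
    ((hX.iterate_deriv' 0 2).continuous.continuousOn).add
      (hRcont.matrix_mulVec hX.continuous.continuousOn)
  have hboundary (Y : ℝ → Fin d → ℝ) (hY : ContDiff ℝ 1 Y) (hYA : Y (2 * π) = A *ᵥ Y 0) :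
      ∫ t in (0 : ℝ)..(2 * π), J t ⬝ᵥ Y t =
        deriv X (2 * π) ⬝ᵥ Y (2 * π) - deriv X 0 ⬝ᵥ Y 0 := by
    have hparts := integral_deriv_dotProduct_deriv_sub_mulVec_dotProduct two_pi_pos.le hRcont hX hY
    linarith [hker Y hY hYA]
  have hJ0 : EqOn J 0 (Icc 0 (2 * π)) :=
    eqOn_zero_of_forall_integral_dotProduct_eq_zero two_pi_pos hJ fun Y hY h0 h2π => by
      simpa [h0, h2π] using hboundary Y hY (by simp [h0, h2π])
  refine ⟨hJ0, eq_mulVec_of_forall_dotProduct_mulVec_eq hA fun v => ?_⟩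
  set Y := fun t : ℝ => v + (t / (2 * π)) • (A *ᵥ v - v)
  have hY0 : Y 0 = v := by simp [Y]
  have hY2π : Y (2 * π) = A *ᵥ v := by simp [Y, two_pi_pos.ne']
  have hY := hboundary Y (by fun_prop) (by rw [hY0, hY2π])
  rwa [intervalIntegral.integral_congr (g := fun _ => 0) fun t ht => by
    simp [hJ0 (uIcc_of_le two_pi_pos.le ▸ ht)], intervalIntegral.integral_zero, hY0, hY2π,
    eq_comm, sub_eq_zero] at hY

/-- If `X` is `C²` with `X(2π) = A·X(0)` and `X` is in the kernel of the
index form — i.e. `∫₀^{2π} (⟨X', Y'⟩ − ⟨R X, Y⟩) dt = 0` for every `C¹` field `Y` with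
`Y(2π) = A·Y(0)` — then `X'' + R·X = 0` on `[0, 2π]` and `X'(2π) = A·X'(0)`. -/
theorem kernel_of_index_form_is_periodic_jacobi_field
    (d : ℕ) (hd : 1 ≤ d)
    (A : Matrix (Fin d) (Fin d) ℝ) (hA : Aᵀ * A = 1)
    (R : ℝ → Matrix (Fin d) (Fin d) ℝ)
    (hRcont : ContinuousOn R (Set.Icc 0 (2 * π)))
    (hRsymm : ∀ t ∈ Set.Icc (0 : ℝ) (2 * π), (R t)ᵀ = R t)
    (X : ℝ → (Fin d → ℝ))
    (hX : ContDiff ℝ 2 X)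
    (hX0 : X (2 * π) = A.mulVec (X 0))
    (hker : ∀ Y : ℝ → (Fin d → ℝ), ContDiff ℝ 1 Y → Y (2 * π) = A.mulVec (Y 0) →
      ∫ t in (0 : ℝ)..(2 * π),
        (deriv X t ⬝ᵥ deriv Y t - (R t).mulVec (X t) ⬝ᵥ Y t) = 0) :
    (∀ t ∈ Set.Icc (0 : ℝ) (2 * π),
      deriv (deriv X) t + (R t).mulVec (X t) = 0) ∧
    deriv X (2 * π) = A.mulVec (deriv X 0) :=
  kernel_of_index_form_is_periodic_jacobi_field_general d A hA R hRcont X hX hker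
end

section
/- Let N ≥ 1, let J be the standard 2N×2N complex-structure matrix and let P be a real symplectic 2N×2N matrix. Let θ : ℝ → ℝ, λ : ℝ → ℝ and v : ℝ → ℝ^{2N} be differentiable at 0, and suppose: cos θ(0) = 1 (hence sin θ(0) = 0); v(0) ≠ 0 and P·v(0) = v(0); λ takes real values; and for all t, (cos θ(t)·I + sin θ(t)·J)·P·v(t) = λ(t)·v(t). Then θ'(0) = 0. -/
/-!
Differentiate the eigenvalue equation at `0`. Since `cos θ(0) = 1`, the rotation `exp (θ(0) J)`
is the identity and `λ(0) = 1`, so `P v' + θ'(0) J v₀ = v' + λ'(0) v₀`. Pairing with `J v₀`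
removes every term but `θ'(0) ‖v₀‖²`: `⟨J v₀, v₀⟩ = 0`, `⟨J v₀, J v₀⟩ = ‖v₀‖²`, and
`⟨J v₀, P v'⟩ = ω(P v₀, P v') = ω(v₀, v') = ⟨J v₀, v'⟩` because `P` is symplectic and fixes `v₀`.
-/

open Matrix

theorem HasDerivAt.const_mulVec {𝕜 : Type*} [NontriviallyNormedField 𝕜] [CompleteSpace 𝕜]
    {m n : Type*} [Fintype m] [Fintype n] (A : Matrix m n 𝕜)
    {w : 𝕜 → n → 𝕜} {w' : n → 𝕜} {t : 𝕜} (hw : HasDerivAt w w' t) :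
    HasDerivAt (fun s => A *ᵥ w s) (A *ᵥ w') t :=
  (mulVecLin A).toContinuousLinearMap.hasFDerivAt.comp_hasDerivAt t hw

namespace Matrix

variable {l : Type*} [DecidableEq l] [Fintype l]

section SymplecticForm

variable {R : Type*} [CommRing R]

theorem J_mulVec_J_mulVec (x : l ⊕ l → R) : J l R *ᵥ (J l R *ᵥ x) = -x := by
  rw [mulVec_mulVec, J_squared, neg_mulVec, one_mulVec]

theorem J_mulVec_dotProduct_self (x : l ⊕ l → R) : (J l R *ᵥ x) ⬝ᵥ x = 0 := by
  simp [J, dotProduct, mulVec, fromBlocks, Fintype.sum_sum_type, one_apply, mul_comm]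

theorem J_mulVec_dotProduct_J_mulVec (x : l ⊕ l → R) :
    (J l R *ᵥ x) ⬝ᵥ (J l R *ᵥ x) = x ⬝ᵥ x := by
  rw [dotProduct_mulVec, ← mulVec_transpose, J_transpose, neg_mulVec, J_mulVec_J_mulVec, neg_neg]

theorem J_mulVec_mulVec_dotProduct_mulVec {P : Matrix (l ⊕ l) (l ⊕ l) R}
    (hP : Pᵀ * J l R * P = J l R) (x y : l ⊕ l → R) :
    (J l R *ᵥ (P *ᵥ x)) ⬝ᵥ (P *ᵥ y) = (J l R *ᵥ x) ⬝ᵥ y := by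
  rw [dotProduct_mulVec, ← mulVec_transpose, mulVec_mulVec, mulVec_mulVec, hP]

theorem eq_zero_of_mulVec_add_smul_J_mulVec_eq [LinearOrder R] [IsStrictOrderedRing R]
    {P : Matrix (l ⊕ l) (l ⊕ l) R} (hP : Pᵀ * J l R * P = J l R) {x y : l ⊕ l → R} {c d : R}
    (hx : P *ᵥ x = x) (hx0 : x ≠ 0) (h : P *ᵥ y + c • (J l R *ᵥ x) = y + d • x) : c = 0 := by
  have hPy : (J l R *ᵥ x) ⬝ᵥ (P *ᵥ y) = (J l R *ᵥ x) ⬝ᵥ y := by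
    simpa only [hx] using J_mulVec_mulVec_dotProduct_mulVec hP x y
  have hpair := congrArg (fun z => (J l R *ᵥ x) ⬝ᵥ z) h
  simp only [dotProduct_add, dotProduct_smul, smul_eq_mul, hPy, J_mulVec_dotProduct_J_mulVec,
    J_mulVec_dotProduct_self, mul_zero, add_zero, add_eq_left] at hpair
  exact (mul_eq_zero.1 hpair).resolve_right (dotProduct_self_eq_zero.not.2 hx0)

end SymplecticForm

/-- `exp (θ J)`, the rotation by `θ` in each complex line. -/
noncomputable def rotJ (l : Type*) [DecidableEq l] (θ : ℝ) : Matrix (l ⊕ l) (l ⊕ l) ℝ :=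
  Real.cos θ • 1 + Real.sin θ • J l ℝ

theorem rotJ_mulVec (θ : ℝ) (x : l ⊕ l → ℝ) :
    rotJ l θ *ᵥ x = Real.cos θ • x + Real.sin θ • (J l ℝ *ᵥ x) := by
  rw [rotJ, add_mulVec, smul_mulVec, smul_mulVec, one_mulVec]

omit [Fintype l] in
theorem rotJ_eq_one_of_cos_eq_one {θ : ℝ} (h : Real.cos θ = 1) : rotJ l θ = 1 := by
  rw [rotJ, h, Real.sin_eq_zero_iff_cos_eq.2 (Or.inl h), one_smul, zero_smul, add_zero]

theorem hasDerivAt_rotJ_mulVec {θ : ℝ → ℝ} {w : ℝ → l ⊕ l → ℝ} {θ' t : ℝ} {w' : l ⊕ l → ℝ}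
    (hθ : HasDerivAt θ θ' t) (hw : HasDerivAt w w' t) :
    HasDerivAt (fun s => rotJ l (θ s) *ᵥ w s)
      (rotJ l (θ t) *ᵥ w' + θ' • (J l ℝ *ᵥ (rotJ l (θ t) *ᵥ w t))) t := by
  simp_rw [rotJ_mulVec]
  refine ((hθ.cos.smul hw).add (hθ.sin.smul (hw.const_mulVec (J l ℝ)))).congr_deriv ?_
  rw [mulVec_add, mulVec_smul, mulVec_smul, J_mulVec_J_mulVec]
  module

end Matrix

theorem deriv_theta_eq_zero_of_real_eigenvalue_family_general
    (N : ℕ)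
    (P : Matrix (Fin N ⊕ Fin N) (Fin N ⊕ Fin N) ℝ)
    (hP : Pᵀ * Matrix.J (Fin N) ℝ * P = Matrix.J (Fin N) ℝ)
    (θ lam : ℝ → ℝ) (v : ℝ → ((Fin N ⊕ Fin N) → ℝ))
    (hθ : DifferentiableAt ℝ θ 0)
    (hlam : DifferentiableAt ℝ lam 0)
    (hv : DifferentiableAt ℝ v 0)
    (hθ0 : Real.cos (θ 0) = 1)
    (hv0 : v 0 ≠ 0)
    (hfix : P.mulVec (v 0) = v 0)
    (heig : ∀ t : ℝ,
      ((Real.cos (θ t)) • (1 : Matrix (Fin N ⊕ Fin N) (Fin N ⊕ Fin N) ℝ)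
          + (Real.sin (θ t)) • Matrix.J (Fin N) ℝ).mulVec (P.mulVec (v t))
        = lam t • v t) :
    deriv θ 0 = 0 := by
  have hrot0 : rotJ (Fin N) (θ 0) = 1 := rotJ_eq_one_of_cos_eq_one hθ0
  have hlam0 : lam 0 = 1 := by
    have h0 : rotJ (Fin N) (θ 0) *ᵥ (P *ᵥ v 0) = lam 0 • v 0 := heig 0
    rw [hrot0, one_mulVec, hfix] at h0
    exact smul_left_injective ℝ hv0 (h0.symm.trans (one_smul ℝ _).symm)
  have hR : HasDerivAt (fun t => rotJ (Fin N) (θ t) *ᵥ (P *ᵥ v t))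
      (lam 0 • deriv v 0 + deriv lam 0 • v 0) 0 := by
    rw [show (fun t => rotJ (Fin N) (θ t) *ᵥ (P *ᵥ v t)) = lam • v from funext heig]
    exact hlam.hasDerivAt.smul hv.hasDerivAt
  have key := (hasDerivAt_rotJ_mulVec hθ.hasDerivAt (hv.hasDerivAt.const_mulVec P)).unique hR
  rw [hrot0, one_mulVec, one_mulVec, hfix, hlam0, one_smul] at key
  exact eq_zero_of_mulVec_add_smul_J_mulVec_eq hP hfix hv0 key

/-- Let `P` be a real symplectic `2N×2N` matrix, and let `θ, λ, v` be
differentiable at `0` with `cos θ(0) = 1`, `v(0) ≠ 0`, `P·v(0) = v(0)`, and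
`(cos θ(t)·I + sin θ(t)·J)·P·v(t) = λ(t)·v(t)` for all `t`. Then `θ'(0) = 0`. -/
theorem deriv_theta_eq_zero_of_real_eigenvalue_family
    (N : ℕ) (hN : 1 ≤ N)
    (P : Matrix (Fin N ⊕ Fin N) (Fin N ⊕ Fin N) ℝ)
    (hP : Pᵀ * Matrix.J (Fin N) ℝ * P = Matrix.J (Fin N) ℝ)
    (θ lam : ℝ → ℝ) (v : ℝ → ((Fin N ⊕ Fin N) → ℝ))
    (hθ : DifferentiableAt ℝ θ 0)
    (hlam : DifferentiableAt ℝ lam 0)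
    (hv : DifferentiableAt ℝ v 0)
    (hθ0 : Real.cos (θ 0) = 1)
    (hv0 : v 0 ≠ 0)
    (hfix : P.mulVec (v 0) = v 0)
    (heig : ∀ t : ℝ,
      ((Real.cos (θ t)) • (1 : Matrix (Fin N ⊕ Fin N) (Fin N ⊕ Fin N) ℝ)
          + (Real.sin (θ t)) • Matrix.J (Fin N) ℝ).mulVec (P.mulVec (v t))
        = lam t • v t) :
    deriv θ 0 = 0 :=
  deriv_theta_eq_zero_of_real_eigenvalue_family_general N P hP θ lam v hθ hlam hv hθ0 hv0 hfix heig
end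

section
/- Let d ≥ 1, let A be a real orthogonal d×d matrix, and let R : ℝ → (d×d real matrices) be continuous on [0, 2π] with R(t) symmetric for every t ∈ [0, 2π]. Then there exists m ∈ ℕ with the following property: for every subspace W of the space of functions ℝ → ℝ^d such that every f ∈ W is continuously differentiable and satisfies f(2π) = A·f(0), and such that every nonzero f ∈ W satisfies ∫₀^{2π} ( ‖f'(t)‖² − ⟨R(t)·f(t), f(t)⟩ ) dt < 0, if W is finite-dimensional then dim W ≤ m. (Equivalently: the index form is negative definite only on subspaces of uniformly bounded dimension, so the negative space is finite dimensional.) -/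
/-!
If `f` vanishes at the `k + 1` points of a grid of mesh `L / k` on `[0, L]`, then
Cauchy–Schwarz on each cell gives `‖f t‖² ≤ (L / k) ∫₀ᴸ ‖f'‖²`, while continuity of `R` on the
compact interval gives `⟨R t v, v⟩ ≤ C ‖v‖²`. Hence `∫₀ᴸ ⟨R f, f⟩ ≤ (L² C / k) ∫₀ᴸ ‖f'‖²`, and
for `k ≥ L² C` the index form is nonnegative on such `f`. On a subspace where the index form is
negative definite, sampling on the grid is therefore injective, so its dimension is at most
`(k + 1) d`.
-/

open Matrix Real MeasureTheory

theorem sq_intervalIntegral_le_mul_intervalIntegral_sq {g : ℝ → ℝ} {a b : ℝ} (hab : a ≤ b)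
    (hg : IntervalIntegrable g volume a b)
    (hg2 : IntervalIntegrable (fun x => g x ^ 2) volume a b) :
    (∫ x in a..b, g x) ^ 2 ≤ (b - a) * ∫ x in a..b, g x ^ 2 := by
  -- `c ↦ ∫ (c g - 1)²` is a nonnegative quadratic, so its discriminant is nonpositive.
  have hquad : ∀ c : ℝ, 0 ≤ (∫ x in a..b, g x ^ 2) * (c * c) + (-2 * ∫ x in a..b, g x) * c
      + (b - a) := by
    intro c
    have hexp : ∫ x in a..b, (c * g x - 1) ^ 2 = (∫ x in a..b, g x ^ 2) * (c * c)
        + (-2 * ∫ x in a..b, g x) * c + (b - a) := by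
      have hexpand : (fun x => (c * g x - 1) ^ 2)
          = fun x => (c * c) * g x ^ 2 + ((-2 * c) * g x + 1) := by
        ext x; ring
      rw [hexpand, intervalIntegral.integral_add (hg2.const_mul _)
        ((hg.const_mul _).add intervalIntegrable_const), intervalIntegral.integral_add
        (hg.const_mul _) intervalIntegrable_const, intervalIntegral.integral_const_mul,
        intervalIntegral.integral_const_mul, intervalIntegral.integral_const, smul_eq_mul]
      ring
    rw [← hexp]
    exact intervalIntegral.integral_nonneg hab fun x _ => sq_nonneg _
  have hdiscr := discrim_le_zero hquad
  rw [discrim] at hdiscr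
  linarith

theorem sq_le_mul_intervalIntegral_sq_of_hasDerivAt {g g' : ℝ → ℝ} {a t : ℝ} (hat : a ≤ t)
    (hg : ∀ x ∈ Set.uIcc a t, HasDerivAt g (g' x) x) (hg' : ContinuousOn g' (Set.uIcc a t))
    (ha : g a = 0) :
    g t ^ 2 ≤ (t - a) * ∫ x in a..t, g' x ^ 2 := by
  have hftc : ∫ x in a..t, g' x = g t := by
    rw [intervalIntegral.integral_eq_sub_of_hasDerivAt hg hg'.intervalIntegrable, ha, sub_zero]
  rw [← hftc]
  exact sq_intervalIntegral_le_mul_intervalIntegral_sq hat hg'.intervalIntegrable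
    (hg'.pow 2).intervalIntegrable

theorem dotProduct_self_le_mul_intervalIntegral_deriv {ι : Type*} [Fintype ι]
    {F : ℝ → ι → ℝ} (hF : ContDiff ℝ 1 F) {a t : ℝ} (hat : a ≤ t) (ha : F a = 0) :
    F t ⬝ᵥ F t ≤ (t - a) * ∫ s in a..t, deriv F s ⬝ᵥ deriv F s := by
  have hderiv : ∀ s, HasDerivAt F (deriv F s) s :=
    fun s => ((hF.differentiable one_ne_zero) s).hasDerivAt
  have hcont : Continuous (deriv F) := hF.continuous_deriv le_rfl
  have hcoord : ∀ j, F t j ^ 2 ≤ (t - a) * ∫ s in a..t, deriv F s j ^ 2 := fun j =>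
    sq_le_mul_intervalIntegral_sq_of_hasDerivAt hat
      (fun s _ => hasDerivAt_pi.1 (hderiv s) j)
      ((continuous_apply j).comp hcont).continuousOn (congrFun ha j)
  calc F t ⬝ᵥ F t = ∑ j, F t j ^ 2 := by simp only [dotProduct, sq]
    _ ≤ ∑ j, (t - a) * ∫ s in a..t, deriv F s j ^ 2 := Finset.sum_le_sum fun j _ => hcoord j
    _ = (t - a) * ∫ s in a..t, deriv F s ⬝ᵥ deriv F s := by
      rw [← Finset.mul_sum, ← intervalIntegral.integral_finsetSum (f := fun j s => deriv F s j ^ 2)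
        fun j _ => (((continuous_apply j).comp hcont).pow 2).intervalIntegrable _ _]
      simp only [dotProduct, sq]

theorem exists_grid_point_le {L t : ℝ} {k : ℕ} (hL : 0 < L) (hk : 0 < k) (ht : t ∈ Set.Icc 0 L) :
    ∃ i : ℕ, i ≤ k ∧ L * i / k ≤ t ∧ t - L * i / k ≤ L / k := by
  have hk' : (0 : ℝ) < k := Nat.cast_pos.2 hk
  have hx : 0 ≤ t * k / L := div_nonneg (mul_nonneg ht.1 hk'.le) hL.le
  refine ⟨⌊t * k / L⌋₊, ?_, ?_, ?_⟩
  · refine Nat.floor_le_of_le ?_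
    rw [div_le_iff₀ hL]
    nlinarith [ht.2]
  · have := Nat.floor_le hx
    rw [le_div_iff₀ hL] at this
    rw [div_le_iff₀ hk']
    linarith
  · have := Nat.lt_floor_add_one (t * k / L)
    rw [div_lt_iff₀ hL] at this
    rw [sub_le_iff_le_add, ← add_div, le_div_iff₀ hk']
    linarith

theorem dotProduct_self_le_of_eq_zero_on_grid {ι : Type*} [Fintype ι] {L : ℝ} {k : ℕ}
    (hL : 0 < L) (hk : 0 < k) {F : ℝ → ι → ℝ} (hF : ContDiff ℝ 1 F)
    (hgrid : ∀ i ≤ k, F (L * i / k) = 0) {t : ℝ} (ht : t ∈ Set.Icc 0 L) :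
    F t ⬝ᵥ F t ≤ L / k * ∫ s in 0..L, deriv F s ⬝ᵥ deriv F s := by
  obtain ⟨i, hik, hit, hmesh⟩ := exists_grid_point_le hL hk ht
  have hD : ∀ s, 0 ≤ deriv F s ⬝ᵥ deriv F s := fun s => dotProduct_self_star_nonneg _
  calc F t ⬝ᵥ F t ≤ (t - L * i / k) * ∫ s in L * i / k..t, deriv F s ⬝ᵥ deriv F s :=
        dotProduct_self_le_mul_intervalIntegral_deriv hF hit (hgrid i hik)
    _ ≤ L / k * ∫ s in 0..L, deriv F s ⬝ᵥ deriv F s := by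
      refine mul_le_mul hmesh ?_ (intervalIntegral.integral_nonneg hit fun s _ => hD s)
        (by positivity)
      exact intervalIntegral.integral_mono_interval (by positivity) hit ht.2
        (ae_of_all _ hD) (((hF.continuous_deriv le_rfl).dotProduct
          (hF.continuous_deriv le_rfl)).intervalIntegrable _ _)

theorem mulVec_dotProduct_self_le {ι : Type*} [Fintype ι] (M : Matrix ι ι ℝ) (v : ι → ℝ) :
    M *ᵥ v ⬝ᵥ v ≤ (∑ i, ∑ j, |M i j|) * (v ⬝ᵥ v) := by
  have hsq : ∀ i, v i ^ 2 ≤ v ⬝ᵥ v := fun i => by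
    simpa only [dotProduct, sq] using
      Finset.single_le_sum (f := fun i => v i ^ 2) (fun _ _ => sq_nonneg _) (Finset.mem_univ i)
  have hterm : ∀ i j, M i j * v j * v i ≤ |M i j| * (v ⬝ᵥ v) := fun i j => by
    have h2 : |v j| * |v i| ≤ v ⬝ᵥ v := by
      nlinarith [two_mul_le_add_sq |v j| |v i|, sq_abs (v j), sq_abs (v i), hsq i, hsq j]
    calc M i j * v j * v i ≤ |M i j| * (|v j| * |v i|) := by
          rw [← abs_mul, ← abs_mul, ← mul_assoc]; exact le_abs_self _
      _ ≤ |M i j| * (v ⬝ᵥ v) := mul_le_mul_of_nonneg_left h2 (abs_nonneg _)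
  calc M *ᵥ v ⬝ᵥ v = ∑ i, ∑ j, M i j * v j * v i := by
        simp only [dotProduct, mulVec, Finset.sum_mul]
    _ ≤ ∑ i, ∑ j, |M i j| * (v ⬝ᵥ v) :=
        Finset.sum_le_sum fun i _ => Finset.sum_le_sum fun j _ => hterm i j
    _ = (∑ i, ∑ j, |M i j|) * (v ⬝ᵥ v) := by simp only [Finset.sum_mul]

theorem IsCompact.exists_mulVec_dotProduct_le {X ι : Type*} [TopologicalSpace X] [Fintype ι]
    {s : Set X} (hs : IsCompact s) {R : X → Matrix ι ι ℝ} (hR : ContinuousOn R s) :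
    ∃ C, 0 ≤ C ∧ ∀ x ∈ s, ∀ v, R x *ᵥ v ⬝ᵥ v ≤ C * (v ⬝ᵥ v) := by
  have hentries : ContinuousOn (fun x => ∑ i, ∑ j, |R x i j|) s :=
    continuousOn_finsetSum _ fun i _ => continuousOn_finsetSum _ fun j _ =>
      ((continuous_apply_apply i j).comp_continuousOn hR).abs
  obtain ⟨C, hC⟩ := hs.exists_bound_of_continuousOn hentries
  refine ⟨max C 0, le_max_right _ _, fun x hx v => ?_⟩
  refine (mulVec_dotProduct_self_le (R x) v).trans (mul_le_mul_of_nonneg_right ?_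
    (dotProduct_self_star_nonneg v))
  exact (le_abs_self _).trans ((hC x hx).trans (le_max_left _ _))

theorem intervalIntegral_indexForm_nonneg_of_eq_zero_on_grid {ι : Type*} [Fintype ι]
    {L C : ℝ} {k : ℕ} (hL : 0 < L) (hk : 0 < k) (hC : 0 ≤ C) (hCk : L ^ 2 * C ≤ k)
    {R : ℝ → Matrix ι ι ℝ} (hR : ContinuousOn R (Set.Icc 0 L))
    (hRC : ∀ t ∈ Set.Icc 0 L, ∀ v, R t *ᵥ v ⬝ᵥ v ≤ C * (v ⬝ᵥ v))
    {F : ℝ → ι → ℝ} (hF : ContDiff ℝ 1 F) (hgrid : ∀ i ≤ k, F (L * i / k) = 0) :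
    0 ≤ ∫ t in 0..L, (deriv F t ⬝ᵥ deriv F t - R t *ᵥ F t ⬝ᵥ F t) := by
  set E := ∫ t in 0..L, deriv F t ⬝ᵥ deriv F t
  have hE : 0 ≤ E := intervalIntegral.integral_nonneg hL.le fun t _ =>
    dotProduct_self_star_nonneg _
  have hDcont : Continuous fun t => deriv F t ⬝ᵥ deriv F t :=
    (hF.continuous_deriv le_rfl).dotProduct (hF.continuous_deriv le_rfl)
  have hPcont : ContinuousOn (fun t => R t *ᵥ F t ⬝ᵥ F t) (Set.Icc 0 L) := by
    have := hF.continuous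
    fun_prop
  have hpointwise : ∀ t ∈ Set.Icc 0 L,
      deriv F t ⬝ᵥ deriv F t - C * (L / k * E) ≤ deriv F t ⬝ᵥ deriv F t - R t *ᵥ F t ⬝ᵥ F t :=
    fun t ht => sub_le_sub_left ((hRC t ht (F t)).trans (mul_le_mul_of_nonneg_left
      (dotProduct_self_le_of_eq_zero_on_grid hL hk hF hgrid ht) hC)) _
  have hmesh : L * (C * (L / k * E)) ≤ E := by
    have hk' : (0 : ℝ) < k := Nat.cast_pos.2 hk
    calc L * (C * (L / k * E)) = L ^ 2 * C / k * E := by ring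
      _ ≤ 1 * E := mul_le_mul_of_nonneg_right ((div_le_one hk').2 hCk) hE
      _ = E := one_mul E
  calc 0 ≤ E - L * (C * (L / k * E)) := sub_nonneg.2 hmesh
    _ = ∫ t in 0..L, (deriv F t ⬝ᵥ deriv F t - C * (L / k * E)) := by
      rw [intervalIntegral.integral_sub (hDcont.intervalIntegrable _ _) intervalIntegrable_const,
        intervalIntegral.integral_const, smul_eq_mul, sub_zero]
    _ ≤ ∫ t in 0..L, (deriv F t ⬝ᵥ deriv F t - R t *ᵥ F t ⬝ᵥ F t) :=
      intervalIntegral.integral_mono_on hL.le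
        ((hDcont.sub continuous_const).intervalIntegrable _ _)
        ((hDcont.continuousOn.sub hPcont).intervalIntegrable_of_Icc hL.le) hpointwise

theorem Submodule.finrank_le_card_mul_finrank_of_eval_eq_zero {K X E ι : Type*} [Field K]
    [AddCommGroup E] [Module K E] [FiniteDimensional K E] [Fintype ι] (s : ι → X)
    (W : Submodule K (X → E)) (hW : ∀ f ∈ W, (∀ i, f (s i) = 0) → f = 0) :
    Module.finrank K W ≤ Fintype.card ι * Module.finrank K E := by
  let sample : W →ₗ[K] ι → E := (LinearMap.pi fun i => LinearMap.proj (s i)).comp W.subtype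
  have hinj : Function.Injective sample := by
    rw [← LinearMap.ker_eq_bot, LinearMap.ker_eq_bot']
    exact fun f hf => Subtype.ext (hW f f.2 (congrFun hf))
  simpa [Module.finrank_pi_fintype] using LinearMap.finrank_le_finrank_of_injective hinj

theorem negative_space_of_index_form_finiteDimensional_general
    (d : ℕ)
    (A : Matrix (Fin d) (Fin d) ℝ)
    (R : ℝ → Matrix (Fin d) (Fin d) ℝ)
    (hRcont : ContinuousOn R (Set.Icc 0 (2 * π))) :
    ∃ m : ℕ, ∀ W : Submodule ℝ (ℝ → (Fin d → ℝ)),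
      (∀ f ∈ W, ContDiff ℝ 1 f ∧ f (2 * π) = A.mulVec (f 0)) →
      (∀ f ∈ W, f ≠ 0 →
        (∫ t in (0 : ℝ)..(2 * π),
          (deriv f t ⬝ᵥ deriv f t - (R t).mulVec (f t) ⬝ᵥ f t)) < 0) →
      FiniteDimensional ℝ ↥W →
      Module.finrank ℝ ↥W ≤ m := by
  obtain ⟨C, hC, hRC⟩ := isCompact_Icc.exists_mulVec_dotProduct_le hRcont
  set k := ⌈(2 * π) ^ 2 * C⌉₊ + 1
  have hCk : (2 * π) ^ 2 * C ≤ k := (Nat.le_ceil _).trans (by norm_cast; omega)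
  refine ⟨(k + 1) * d, fun W hW hneg _ => ?_⟩
  simpa using W.finrank_le_card_mul_finrank_of_eval_eq_zero (fun i : Fin (k + 1) => 2 * π * i / k)
    fun f hf hgrid => by
      by_contra hf0
      exact (hneg f hf hf0).not_ge <| intervalIntegral_indexForm_nonneg_of_eq_zero_on_grid
        (by positivity) (Nat.zero_lt_succ _) hC hCk hRcont hRC (hW f hf).1
        fun i hi => hgrid ⟨i, Nat.lt_succ_of_le hi⟩

/-- Given an orthogonal matrix `A` and a continuous family `R(t)` of
symmetric matrices on `[0, 2π]`, there is a uniform bound `m` on the dimension of any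
finite-dimensional subspace `W` of periodic `C¹` fields (`f(2π) = A·f(0)`) on which the
index form `H(f, f) = ∫₀^{2π} (‖f'‖² − ⟨R f, f⟩) dt` is negative definite. -/
theorem negative_space_of_index_form_finiteDimensional
    (d : ℕ) (hd : 1 ≤ d)
    (A : Matrix (Fin d) (Fin d) ℝ) (hA : Aᵀ * A = 1)
    (R : ℝ → Matrix (Fin d) (Fin d) ℝ)
    (hRcont : ContinuousOn R (Set.Icc 0 (2 * π)))
    (hRsymm : ∀ t ∈ Set.Icc (0 : ℝ) (2 * π), (R t)ᵀ = R t) :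
    ∃ m : ℕ, ∀ W : Submodule ℝ (ℝ → (Fin d → ℝ)),
      (∀ f ∈ W, ContDiff ℝ 1 f ∧ f (2 * π) = A.mulVec (f 0)) →
      (∀ f ∈ W, f ≠ 0 →
        (∫ t in (0 : ℝ)..(2 * π),
          (deriv f t ⬝ᵥ deriv f t - (R t).mulVec (f t) ⬝ᵥ f t)) < 0) →
      FiniteDimensional ℝ ↥W →
      Module.finrank ℝ ↥W ≤ m :=
  negative_space_of_index_form_finiteDimensional_general d A R hRcont
end
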